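/- arXiv:1811.08174 — 3 statements merged into one kernel-verified Lean document; each statement's English description precedes it below -/
import Mathlib

section
/- Let N₁,…,N_n be T-point processes defined on an ergodic probability-preserving system (Ω,ℱ,ℙ,S), each having moments of all orders. Assume there exist a real number c > 0 and a partition π of {1,…,n} such that for all sets A₁,…,A_n ∈ 𝒜_f one has 𝔼[N₁(A₁)⋯N_n(A_n)] ≥ c·m_π(A₁×⋯×A_n). Then for any atom P of π and any A ∈ 𝒜_f, ℙ(A ∩ ⋂_{i∈P} N_i ≠ ∅) > 0 (identifying each simple counting measure N_i(ω) with its set of atoms). In particular, for any i,j in the same atom P, the processes N_i and N_j are not dissociated. -/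
open MeasureTheory ENNReal NNReal Set Bornology

noncomputable section

namespace PPP

variable {X Y Ω : Type*} [MeasurableSpace X] [MeasurableSpace Y] [MeasurableSpace Ω]

/-- A measure is *boundedly finite* if it gives finite mass to every bounded set. -/
def BddFin [Bornology X] (ξ : Measure X) : Prop :=
  ∀ B : Set X, IsBounded B → ξ B < ⊤

/-- A *simple counting measure*: a sum of Dirac masses on a countable set of distinct
points having finitely many points in every bounded set. -/
def IsSimpleCounting [Bornology X] (ξ : Measure X) : Prop :=
  ∃ s : Set X, s.Countable ∧ (∀ B : Set X, IsBounded B → (s ∩ B).Finite) ∧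
    ∀ A : Set X, MeasurableSet A → ξ A = (s ∩ A).encard

/-- A counting measure (no local-finiteness requirement; used on marked spaces). -/
def IsCountingOn (ξ : Measure Y) : Prop :=
  ∃ s : Set Y, s.Countable ∧ ∀ A : Set Y, MeasurableSet A → ξ A = (s ∩ A).encard

/-- A discrete (purely atomic) measure: concentrated on a countable set. -/
def IsDiscreteM (ξ : Measure X) : Prop := ∃ s : Set X, s.Countable ∧ ξ sᶜ = 0

/-- A continuous (atomless) measure. -/
def IsContinuousM (ξ : Measure X) : Prop := ∀ x : X, ξ {x} = 0

/-- An `ℝ≥0∞`-valued random variable has the Poisson distribution with parameter `r`. -/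
def HasPoissonDist (P : Measure Ω) (f : Ω → ℝ≥0∞) (r : ℝ≥0∞) : Prop :=
  ∀ n : ℕ, P {ω | f ω = n} =
    ENNReal.ofReal (Real.exp (-r.toReal) * r.toReal ^ n / n.factorial)

/-- `N` is a Poisson point process of intensity `ν`: counts over finitely many disjoint
sets of finite positive `ν`-measure are independent Poisson random variables. -/
def IsPoissonPP (P : Measure Ω) (N : Ω → Measure Y) (ν : Measure Y) : Prop :=
  ∀ (k : ℕ) (A : Fin k → Set Y), (∀ i, MeasurableSet (A i)) →
    (∀ i, 0 < ν (A i)) → (∀ i, ν (A i) < ⊤) →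
    Pairwise (Function.onFun Disjoint A) →
    ProbabilityTheory.iIndepFun (fun i ω => N ω (A i)) P ∧
    ∀ i, HasPoissonDist P (fun ω => N ω (A i)) (ν (A i))

/-- A `T`-random measure on the system `(Ω, P, S)`. -/
structure TRM [Bornology X] (μ : Measure X) (T : X → X) (P : Measure Ω) (S : Ω → Ω) where
  toFun : Ω → Measure X
  measurable' : Measurable toFun
  bddFin' : ∀ᵐ ω ∂P, BddFin (toFun ω)
  null' : ∀ A : Set X, MeasurableSet A → μ A = 0 → ∀ᵐ ω ∂P, toFun ω A = 0
  equivariant' : ∀ᵐ ω ∂P, toFun (S ω) = (toFun ω).map T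

/-- A `T`-point process: a `T`-random measure whose values are simple counting measures. -/
def TRM.IsPointProc [Bornology X] {μ : Measure X} {T : X → X} {P : Measure Ω} {S : Ω → Ω}
    (N : TRM μ T P S) : Prop :=
  ∀ᵐ ω ∂P, IsSimpleCounting (N.toFun ω)

/-- Moments of order `n`. -/
def HasMoment [Bornology X] (P : Measure Ω) (N : Ω → Measure X) (n : ℕ) : Prop :=
  ∀ A : Set X, IsBounded A → MeasurableSet A → ∫⁻ ω, (N ω A) ^ n ∂P < ⊤

/-- Moments of all orders. -/
def HasAllMoments [Bornology X] (P : Measure Ω) (N : Ω → Measure X) : Prop :=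
  ∀ n : ℕ, HasMoment P N n

/-- The value of the measure `m_π` on the rectangle `A 0 × ⋯ × A (n-1)`. -/
def mPartVal (μ : Measure X) {n : ℕ} (π : Finpartition (Finset.univ : Finset (Fin n)))
    (A : Fin n → Set X) : ℝ≥0∞ :=
  ∏ Q ∈ π.parts, μ (⋂ i ∈ Q, A i)

/-- The measure `m_π` on `X^n`. -/
def mPartMeasure (μ : Measure X) {n : ℕ} (π : Finpartition (Finset.univ : Finset (Fin n))) :
    Measure (Fin n → X) :=
  Measure.map (fun y : {Q // Q ∈ π.parts} → X =>
      fun i => y ⟨π.part i, π.part_mem.2 (Finset.mem_univ i)⟩)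
    (Measure.pi fun _ => μ)

/-- The `n`-fold Cartesian power of a map. -/
def piMap (T : X → X) (n : ℕ) : (Fin n → X) → (Fin n → X) := fun x i => T (x i)

/-- `T` has infinite ergodic index: all its Cartesian powers are ergodic. -/
def InfErgIndex (μ : Measure X) (T : X → X) : Prop :=
  ∀ n : ℕ, 1 ≤ n → Ergodic (piMap T n) (Measure.pi fun _ : Fin n => μ)

/-- The map `(x_i) ↦ (T^{k_i} x_i)` on `X^n`. -/
def zpowPiMap (T : X ≃ X) {n : ℕ} (k : Fin n → ℤ) : (Fin n → X) → (Fin n → X) :=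
  fun x i => ((T : Equiv.Perm X) ^ (k i)) (x i)

/-- Property (P): every boundedly finite `T^{×n}`-invariant measure on `X^n` with marginals
absolutely continuous with respect to `μ` is conservative, and it decomposes as a countable
combination of ergodic measures of the form `(T^{k₁}×⋯×T^{k_n})_* m_π`. -/
def PropertyP [MetricSpace X] (μ : Measure X) (T : X ≃ X) : Prop :=
  ∀ n : ℕ, 1 ≤ n → ∀ σ : Measure (Fin n → X),
    (∀ B : Set (Fin n → X), IsBounded B → σ B < ⊤) →
    (∀ i : Fin n, Measure.map (fun x => x i) σ ≪ μ) →
    MeasurePreserving (piMap (⇑T) n) σ σ →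
    Conservative (piMap (⇑T) n) σ ∧
    ∃ (c : ℕ → ℝ≥0∞) (πs : ℕ → Finpartition (Finset.univ : Finset (Fin n)))
      (ks : ℕ → Fin n → ℤ),
      (∀ j, c j ≠ 0 → Ergodic (piMap (⇑T) n)
          (Measure.map (zpowPiMap T (ks j)) (mPartMeasure μ (πs j)))) ∧
      σ = Measure.sum (fun j =>
            c j • Measure.map (zpowPiMap T (ks j)) (mPartMeasure μ (πs j)))

/-- The space `ℓ₁⁺(ℤ)` of summable families of nonnegative reals indexed by `ℤ`. -/
abbrev L1pos : Type := {a : ℤ → ℝ // (∀ k, 0 ≤ a k) ∧ Summable a}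

/-- The cluster random measure built from a counting measure on `X × ℓ₁⁺(ℤ)`:
each point `(x, (a_k)_k)` contributes the measure `Σ_k a_k δ_{T^k x}`. -/
def cluster (T : X ≃ X) (η : Measure (X × L1pos)) : Measure X :=
  η.bind fun p => Measure.sum fun k : ℤ =>
    (Real.toNNReal (p.2.1 k)) • Measure.dirac (((T : Equiv.Perm X) ^ k) p.1)

/-- Infinite divisibility of a probability measure on the space of measures on `X`
(with respect to addition of measures). -/
def IsInfDiv (m : Measure (Measure X)) : Prop :=
  ∀ k : ℕ, 1 ≤ k → ∃ mk : Measure (Measure X), ∃ _h : IsProbabilityMeasure mk,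
    m = Measure.map (fun v : Fin k → Measure X => ∑ i, v i) (Measure.pi fun _ : Fin k => mk)

/-- Two point processes are dissociated. -/
def Dissociated (P : Measure Ω) (S : Ω ≃ Ω) (N₁ N₂ : Ω → Measure X) : Prop :=
  ∀ᵐ ω ∂P, ∀ k : ℤ, ∀ x : X, N₁ ω {x} = 0 ∨ N₂ (((S : Equiv.Perm Ω) ^ k) ω) {x} = 0

/-!
Suppose that almost surely the `N i`, `i ∈ Q`, have no common atom in a bounded set `A`. Cut `A`
into countably many pieces of radius `< r` and apply the lower bound to the rectangles equal to
one piece in the coordinates of `Q` and to `A` elsewhere: summed over the pieces, the joint moment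
stays `≥ c μ(A)^|π|`. Each `N i` has finitely many atoms in `A`, so for small `r` no piece carries
an atom of every `N i`, `i ∈ Q`, and the sum vanishes. Dominated convergence, with dominating
function `∏ i, N i (A)` (integrable thanks to the moments), forces the bound to be `0`.
Non-dissociation is the case `k = 0` of a common atom.
-/

open Filter Topology Function

section CountingMeasures

variable [Bornology X] [MeasurableSingletonClass X] {ξ : Measure X}

lemma IsSimpleCounting.finite_atoms (hξ : IsSimpleCounting ξ) {A : Set X} (hA : IsBounded A) :
    {x ∈ A | ξ {x} ≠ 0}.Finite := by
  obtain ⟨s, -, hfin, hξs⟩ := hξ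
  refine (hfin A hA).subset fun x ⟨hxA, hx⟩ => ⟨?_, hxA⟩
  by_contra hxs
  exact hx (by simp [hξs _ (measurableSet_singleton x), hxs])

lemma IsSimpleCounting.exists_atom_of_ne_zero (hξ : IsSimpleCounting ξ) {D : Set X}
    (hD : MeasurableSet D) (h : ξ D ≠ 0) : ∃ x ∈ D, ξ {x} ≠ 0 := by
  obtain ⟨s, -, -, hξs⟩ := hξ
  obtain ⟨x, hxs, hxD⟩ : (s ∩ D).Nonempty := by
    rw [← Set.encard_ne_zero]
    exact_mod_cast hξs D hD ▸ h
  exact ⟨x, hxD, by simp [hξs _ (measurableSet_singleton x), hxs]⟩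

end CountingMeasures

/-- The atoms of the `ξ i` in `A` are finitely many, hence `2r`-separated for small `r`. -/
lemma eventually_exists_measure_eq_zero_of_subset_ball [MetricSpace X]
    [MeasurableSingletonClass X] {ι : Type*} {Q : Finset ι} (hQ : Q.Nonempty)
    {ξ : ι → Measure X} (hξ : ∀ i ∈ Q, IsSimpleCounting (ξ i)) {A : Set X} (hA : IsBounded A)
    (hA_atoms : ∀ x ∈ A, ∃ i ∈ Q, ξ i {x} = 0) :
    ∀ᶠ r in 𝓝 (0 : ℝ), ∀ (y : X) (D : Set X), MeasurableSet D → D ⊆ A ∩ Metric.ball y r →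
      ∃ i ∈ Q, ξ i D = 0 := by
  set F := ⋃ i ∈ Q, {x ∈ A | ξ i {x} ≠ 0}
  have hF : F.Finite := Q.finite_toSet.biUnion fun i hi => (hξ i hi).finite_atoms hA
  have h2r : Tendsto (fun r : ℝ => 2 * r) (𝓝 0) (𝓝 0) := by
    simpa using (continuous_const_mul (2 : ℝ)).tendsto 0
  have hsep : ∀ᶠ r in 𝓝 (0 : ℝ), ∀ p ∈ F, ∀ q ∈ F, p ≠ q → 2 * r < dist p q := by
    simp only [hF.eventually_all]
    intro p _ q _
    by_cases hpq : p = q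
    · exact Eventually.of_forall fun _ h => absurd hpq h
    · exact (h2r.eventually_lt_const (dist_pos.2 hpq)).mono fun _ h _ => h
  filter_upwards [hsep] with r hr y D hD hDA
  by_contra! hall
  have hatom : ∀ i ∈ Q, ∃ x ∈ D, ξ i {x} ≠ 0 := fun i hi =>
    (hξ i hi).exists_atom_of_ne_zero hD (hall i hi)
  obtain ⟨i₀, hi₀⟩ := hQ
  have : Nonempty X := ⟨(hatom i₀ hi₀).choose⟩
  choose! x hxD hx using hatom
  have hxF : ∀ i ∈ Q, x i ∈ F := fun i hi =>
    Set.mem_iUnion₂.2 ⟨i, hi, (hDA (hxD i hi)).1, hx i hi⟩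
  have hx_eq : ∀ i ∈ Q, x i = x i₀ := by
    intro i hi
    by_contra hne
    refine (hr _ (hxF i hi) _ (hxF i₀ hi₀) hne).not_ge ?_
    have h₁ := Metric.mem_ball.1 (hDA (hxD i hi)).2
    have h₂ := Metric.mem_ball.1 (hDA (hxD i₀ hi₀)).2
    linarith [dist_triangle_right (x i) (x i₀) y]
  obtain ⟨i, hi, hxi⟩ := hA_atoms (x i₀) (hDA (hxD i₀ hi₀)).1
  exact hx i hi (hx_eq i hi ▸ hxi)

lemma iUnion_disjointed_inter_ball {α : Type*} [PseudoMetricSpace α] {u : ℕ → α}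
    (hu : DenseRange u) {r : ℝ} (hr : 0 < r) (A : Set α) :
    ⋃ k, disjointed (fun k => A ∩ Metric.ball (u k) r) k = A := by
  have hcover := (Metric.dense_iff_iUnion_ball _).1 hu r hr
  rw [Set.biUnion_range] at hcover
  rw [iUnion_disjointed, ← Set.inter_iUnion, hcover, Set.inter_univ]

lemma biInter_finset_eq {ι β : Type*} {s : Finset ι} (hs : s.Nonempty) {f : ι → Set β}
    {t : Set β} (h : ∀ i ∈ s, f i = t) : ⋂ i ∈ s, f i = t := by
  rw [Set.iInter₂_congr h]
  exact Set.biInter_const (s := (s : Set ι)) hs t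

section PartitionMeasure

variable {n : ℕ} (μ : Measure X) (π : Finpartition (Finset.univ : Finset (Fin n)))

lemma mPartVal_eq_zero_of_measure_eq_zero {A : Fin n → Set X} {i : Fin n} (h : μ (A i) = 0) :
    mPartVal μ π A = 0 :=
  Finset.prod_eq_zero (π.part_mem.2 (Finset.mem_univ i))
    (measure_mono_null (Set.biInter_subset_of_mem (π.mem_part_self.2 (Finset.mem_univ i))) h)

lemma mPartVal_piecewise {Q : Finset (Fin n)} (hQ : Q ∈ π.parts) (D A : Set X) :
    mPartVal μ π (Q.piecewise (fun _ => D) (fun _ => A)) = μ D * μ A ^ (π.parts.card - 1) := by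
  rw [mPartVal, ← Finset.mul_prod_erase _ _ hQ, ← Finset.card_erase_of_mem hQ,
    ← Finset.prod_const]
  congr 1
  · exact congrArg μ (biInter_finset_eq (π.nonempty_of_mem_parts hQ) fun i hi =>
      Finset.piecewise_eq_of_mem Q _ _ hi)
  · refine Finset.prod_congr rfl fun Q' hQ' => ?_
    obtain ⟨hQ'Q, hQ'⟩ := Finset.mem_erase.1 hQ'
    have hnot : ∀ i ∈ Q', i ∉ Q := fun i hi hiQ => hQ'Q (π.eq_of_mem_parts hQ' hQ hi hiQ)
    exact congrArg μ (biInter_finset_eq (π.nonempty_of_mem_parts hQ') fun i hi =>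
      Finset.piecewise_eq_of_notMem Q _ _ (hnot i hi))

lemma tsum_mPartVal_piecewise {Q : Finset (Fin n)} (hQ : Q ∈ π.parts) {D : ℕ → Set X}
    (hD : ∀ k, MeasurableSet (D k)) (hD_disj : Pairwise (Disjoint on D)) :
    ∑' k, mPartVal μ π (Q.piecewise (fun _ => D k) (fun _ => ⋃ k, D k)) =
      μ (⋃ k, D k) ^ π.parts.card := by
  simp_rw [mPartVal_piecewise μ π hQ]
  rw [ENNReal.tsum_mul_right, ← measure_iUnion hD_disj hD, ← pow_succ',
    Nat.sub_add_cancel (Finset.card_pos.2 ⟨Q, hQ⟩)]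

end PartitionMeasure

lemma piecewise_subset_iUnion {α ι : Type*} {Q : Finset ι} [DecidablePred (· ∈ Q)]
    (D : ℕ → Set α) (k : ℕ) (i : ι) :
    Q.piecewise (fun _ => D k) (fun _ => ⋃ k, D k) i ⊆ ⋃ k, D k :=
  Finset.piecewise_cases (π := fun _ => Set α) Q _ _ (· ⊆ ⋃ k, D k) (Set.subset_iUnion D k)
    subset_rfl

section Piecewise

variable {ι : Type*} {Q : Finset ι} [DecidablePred (· ∈ Q)] {D : ℕ → Set X}

lemma measurableSet_piecewise_iUnion (hD : ∀ k, MeasurableSet (D k)) (k : ℕ) (i : ι) :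
    MeasurableSet (Q.piecewise (fun _ => D k) (fun _ => ⋃ k, D k) i) :=
  Finset.piecewise_cases (π := fun _ => Set X) Q _ _ MeasurableSet (hD k) (.iUnion hD)

lemma tsum_prod_piecewise_le [Fintype ι] [DecidableEq ι] (ξ : ι → Measure X) {i₀ : ι}
    (hi₀ : i₀ ∈ Q) (hD : ∀ k, MeasurableSet (D k)) (hD_disj : Pairwise (Disjoint on D)) :
    ∑' k, ∏ i, ξ i (Q.piecewise (fun _ => D k) (fun _ => ⋃ k, D k) i) ≤ ∏ i, ξ i (⋃ k, D k) :=
  calc ∑' k, ∏ i, ξ i (Q.piecewise (fun _ => D k) (fun _ => ⋃ k, D k) i)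
      ≤ ∑' k, ξ i₀ (D k) * ∏ i ∈ Finset.univ.erase i₀, ξ i (⋃ k, D k) := by
        refine ENNReal.tsum_le_tsum fun k => ?_
        rw [← Finset.mul_prod_erase _ _ (Finset.mem_univ i₀), Finset.piecewise_eq_of_mem _ _ _ hi₀]
        gcongr with i
        exact piecewise_subset_iUnion D k i
    _ = ∏ i, ξ i (⋃ k, D k) := by
        rw [ENNReal.tsum_mul_right, ← measure_iUnion hD_disj hD,
          Finset.mul_prod_erase _ (fun i => ξ i (⋃ k, D k)) (Finset.mem_univ i₀)]

end Piecewise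

lemma measurable_prod_measure_apply {ι : Type*} (s : Finset ι) {N : ι → Ω → Measure X}
    (hN : ∀ i, Measurable (N i)) {B : ι → Set X} (hB : ∀ i, MeasurableSet (B i)) :
    Measurable fun ω => ∏ i ∈ s, N i ω (B i) :=
  Finset.measurable_prod _ fun i _ => (Measure.measurable_coe (hB i)).comp (hN i)

lemma prod_le_sum_pow_card {ι : Type*} [Fintype ι] [Nonempty ι] (x : ι → ℝ≥0∞) :
    ∏ i, x i ≤ ∑ i, x i ^ Fintype.card ι := by
  obtain ⟨i₀, -, hmax⟩ := Finset.exists_max_image Finset.univ x Finset.univ_nonempty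
  calc ∏ i, x i ≤ x i₀ ^ Fintype.card ι :=
        Finset.prod_le_pow_card _ _ _ fun i _ => hmax i (Finset.mem_univ i)
    _ ≤ ∑ i, x i ^ Fintype.card ι :=
        Finset.single_le_sum (f := fun i => x i ^ Fintype.card ι) (fun _ _ => zero_le)
          (Finset.mem_univ i₀)

lemma lintegral_prod_lt_top_of_hasAllMoments [Bornology X] {ι : Type*} [Fintype ι] [Nonempty ι]
    {P : Measure Ω} {N : ι → Ω → Measure X} (hN : ∀ i, Measurable (N i))
    (hmom : ∀ i, HasAllMoments P (N i)) {A : Set X} (hA_bdd : IsBounded A)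
    (hA : MeasurableSet A) : ∫⁻ ω, ∏ i, N i ω A ∂P < ⊤ :=
  calc ∫⁻ ω, ∏ i, N i ω A ∂P ≤ ∫⁻ ω, ∑ i, N i ω A ^ Fintype.card ι ∂P :=
        lintegral_mono fun _ => prod_le_sum_pow_card _
    _ = ∑ i, ∫⁻ ω, N i ω A ^ Fintype.card ι ∂P :=
        lintegral_finsetSum _ fun i _ => ((Measure.measurable_coe hA).comp (hN i)).pow_const _
    _ < ⊤ := ENNReal.sum_lt_top.2 fun i _ => hmom i _ A hA_bdd hA

lemma exists_isBounded_subset_measure_pos [PseudoMetricSpace X] [OpensMeasurableSpace X]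
    {μ : Measure X} {A : Set X} (hA : MeasurableSet A) (hμA : 0 < μ A) :
    ∃ B ⊆ A, MeasurableSet B ∧ 0 < μ B ∧ IsBounded B := by
  obtain ⟨x⟩ : Nonempty X := nonempty_of_measure_ne_zero hμA.ne' |>.to_subtype.map Subtype.val
  obtain ⟨m, hm⟩ := exists_measure_pos_of_not_measure_iUnion_null
    (s := fun m : ℕ => A ∩ Metric.closedBall x m)
    (by rw [Metric.iUnion_inter_closedBall_nat]; exact hμA.ne')
  exact ⟨_, Set.inter_subset_left, hA.inter measurableSet_closedBall, hm,
    Metric.isBounded_closedBall.subset Set.inter_subset_right⟩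

lemma not_dissociated_of_measure_common_atom_pos {P : Measure Ω} {S : Ω ≃ Ω}
    {N₁ N₂ : Ω → Measure X} (h : 0 < P {ω | ∃ x, N₁ ω {x} ≠ 0 ∧ N₂ ω {x} ≠ 0}) :
    ¬ Dissociated P S N₁ N₂ := by
  intro hdis
  refine h.ne' (measure_eq_zero_iff_ae_notMem.2 ?_)
  filter_upwards [hdis] with ω hω ⟨x, h₁, h₂⟩
  simpa [h₁, h₂] using hω 0 x

lemma ofReal_mul_pow_le_lintegral_tsum_prod_piecewise {μ : Measure X} {P : Measure Ω} {n : ℕ}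
    {N : Fin n → Ω → Measure X} (hN : ∀ i, Measurable (N i)) {c : ℝ}
    {π : Finpartition (Finset.univ : Finset (Fin n))}
    (hlow : ∀ A : Fin n → Set X, (∀ i, MeasurableSet (A i)) →
        (∀ i, 0 < μ (A i)) → (∀ i, μ (A i) < ⊤) →
        ENNReal.ofReal c * mPartVal μ π A ≤ ∫⁻ ω, ∏ i, N i ω (A i) ∂P)
    {Q : Finset (Fin n)} (hQ : Q ∈ π.parts) {D : ℕ → Set X} (hD : ∀ k, MeasurableSet (D k))
    (hD_disj : Pairwise (Disjoint on D)) (hμD : μ (⋃ k, D k) < ⊤) :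
    ENNReal.ofReal c * μ (⋃ k, D k) ^ π.parts.card ≤
      ∫⁻ ω, ∑' k, ∏ i, N i ω (Q.piecewise (fun _ => D k) (fun _ => ⋃ k, D k) i) ∂P := by
  set B : ℕ → Fin n → Set X := fun k => Q.piecewise (fun _ => D k) (fun _ => ⋃ k, D k)
  have hB : ∀ k i, MeasurableSet (B k i) := measurableSet_piecewise_iUnion hD
  have hlow' : ∀ k, ENNReal.ofReal c * mPartVal μ π (B k) ≤ ∫⁻ ω, ∏ i, N i ω (B k i) ∂P := by
    intro k
    by_cases hnull : ∃ i, μ (B k i) = 0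
    · obtain ⟨i, hi⟩ := hnull
      simp [mPartVal_eq_zero_of_measure_eq_zero μ π hi]
    · simp only [not_exists] at hnull
      exact hlow _ (hB k) (fun i => pos_iff_ne_zero.2 (hnull i))
        (fun i => (measure_mono (piecewise_subset_iUnion D k i)).trans_lt hμD)
  calc ENNReal.ofReal c * μ (⋃ k, D k) ^ π.parts.card
      = ∑' k, ENNReal.ofReal c * mPartVal μ π (B k) := by
        rw [ENNReal.tsum_mul_left, tsum_mPartVal_piecewise μ π hQ hD hD_disj]
    _ ≤ ∑' k, ∫⁻ ω, ∏ i, N i ω (B k i) ∂P := ENNReal.tsum_le_tsum hlow'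
    _ = ∫⁻ ω, ∑' k, ∏ i, N i ω (B k i) ∂P :=
        (lintegral_tsum fun k => (measurable_prod_measure_apply _ hN (hB k)).aemeasurable).symm

theorem measure_common_atom_pos_of_isBounded [MetricSpace X] [BorelSpace X]
    [TopologicalSpace.SeparableSpace X] {μ : Measure X} {P : Measure Ω} {n : ℕ}
    {N : Fin n → Ω → Measure X} (hN : ∀ i, Measurable (N i))
    (hpt : ∀ i, ∀ᵐ ω ∂P, IsSimpleCounting (N i ω)) (hmom : ∀ i, HasAllMoments P (N i))
    {c : ℝ} (hc : 0 < c) {π : Finpartition (Finset.univ : Finset (Fin n))}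
    (hlow : ∀ A : Fin n → Set X, (∀ i, MeasurableSet (A i)) →
        (∀ i, 0 < μ (A i)) → (∀ i, μ (A i) < ⊤) →
        ENNReal.ofReal c * mPartVal μ π A ≤ ∫⁻ ω, ∏ i, N i ω (A i) ∂P)
    {Q : Finset (Fin n)} (hQ : Q ∈ π.parts) {A : Set X} (hA : MeasurableSet A)
    (hμA : 0 < μ A) (hμA_fin : μ A < ⊤) (hA_bdd : IsBounded A) :
    0 < P {ω | ∃ x ∈ A, ∀ i ∈ Q, N i ω {x} ≠ 0} := by
  obtain ⟨i₀, hi₀⟩ := π.nonempty_of_mem_parts hQ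
  have : Nonempty (Fin n) := ⟨i₀⟩
  have : Nonempty X := nonempty_of_measure_ne_zero hμA.ne' |>.to_subtype.map Subtype.val
  obtain ⟨u, hu⟩ := TopologicalSpace.exists_dense_seq X
  set D : ℝ → ℕ → Set X := fun r => disjointed fun k => A ∩ Metric.ball (u k) r
  have hD : ∀ r k, MeasurableSet (D r k) := fun r =>
    MeasurableSet.disjointed fun k => hA.inter measurableSet_ball
  have hcover : ∀ r > 0, ⋃ k, D r k = A := fun r hr => iUnion_disjointed_inter_ball hu hr A
  set F : ℝ → Ω → ℝ≥0∞ := fun r ω =>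
    ∑' k, ∏ i, N i ω (Q.piecewise (fun _ => D r k) (fun _ => ⋃ k, D r k) i)
  have hF : ∀ r, Measurable (F r) := fun r =>
    .tsum fun k => measurable_prod_measure_apply _ hN (measurableSet_piecewise_iUnion (hD r) k)
  have hlower : ∀ r > 0, ENNReal.ofReal c * μ A ^ π.parts.card ≤ ∫⁻ ω, F r ω ∂P := by
    intro r hr
    have h := ofReal_mul_pow_le_lintegral_tsum_prod_piecewise hN hlow hQ (hD r)
      (disjoint_disjointed _) (hcover r hr ▸ hμA_fin)
    simpa only [F, hcover r hr] using h
  have hbound : ∀ r > 0, ∀ ω, F r ω ≤ ∏ i, N i ω A := fun r hr ω => by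
    simpa only [F, hcover r hr] using
      tsum_prod_piecewise_le (N · ω) hi₀ (hD r) (disjoint_disjointed _)
  by_contra hE
  have hno_common : ∀ᵐ ω ∂P, ∀ x ∈ A, ∃ i ∈ Q, N i ω {x} = 0 := by
    filter_upwards [measure_eq_zero_iff_ae_notMem.1 (not_lt.1 hE |>.antisymm zero_le)] with ω hω
    simpa using hω
  have hlim : ∀ᵐ ω ∂P, Tendsto (fun r => F r ω) (𝓝[>] 0) (𝓝 0) := by
    filter_upwards [hno_common, ae_all_iff.2 hpt] with ω hω hωpt
    refine tendsto_nhds_of_eventually_eq (Eventually.filter_mono nhdsWithin_le_nhds ?_)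
    filter_upwards [eventually_exists_measure_eq_zero_of_subset_ball ⟨i₀, hi₀⟩
      (fun i _ => hωpt i) hA_bdd hω] with r hr
    refine ENNReal.tsum_eq_zero.2 fun k => ?_
    obtain ⟨i, hi, h0⟩ := hr (u k) (D r k) (hD r k) (disjointed_subset _ k)
    exact Finset.prod_eq_zero (Finset.mem_univ i) (by rwa [Finset.piecewise_eq_of_mem _ _ _ hi])
  have hint := tendsto_lintegral_filter_of_dominated_convergence (l := 𝓝[>] 0) _ (.of_forall hF)
    (eventually_nhdsWithin_of_forall fun r hr => ae_of_all _ (hbound r hr))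
    (lintegral_prod_lt_top_of_hasAllMoments hN hmom hA_bdd hA).ne hlim
  rw [lintegral_zero] at hint
  have hle := ge_of_tendsto hint (eventually_nhdsWithin_of_forall hlower)
  exact (mul_ne_zero (by simpa using hc) (pow_ne_zero _ hμA.ne')) (nonpos_iff_eq_zero.1 hle)

theorem stmt3_general
    {X : Type*} [MeasurableSpace X] [MetricSpace X] [BorelSpace X]
    [TopologicalSpace.SeparableSpace X]
    {Ω : Type*} [MeasurableSpace Ω]
    (μ : Measure X) (hμbdd : BddFin μ) (hμinf : μ Set.univ = ⊤)
    (T : X ≃ X)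
    (P : Measure Ω)
    (S : Ω ≃ Ω)
    (n : ℕ) (Ns : Fin n → TRM μ (⇑T) P (⇑S))
    (hpt : ∀ i, (Ns i).IsPointProc) (hmom : ∀ i, HasAllMoments P (Ns i).toFun)
    (c : ℝ) (hc : 0 < c) (π : Finpartition (Finset.univ : Finset (Fin n)))
    (hlow : ∀ A : Fin n → Set X, (∀ i, MeasurableSet (A i)) →
        (∀ i, 0 < μ (A i)) → (∀ i, μ (A i) < ⊤) →
        ENNReal.ofReal c * mPartVal μ π A ≤ ∫⁻ ω, ∏ i, (Ns i).toFun ω (A i) ∂P) :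
    (∀ Q ∈ π.parts, ∀ A : Set X, MeasurableSet A → 0 < μ A → μ A < ⊤ →
        0 < P {ω | ∃ x ∈ A, ∀ i ∈ Q, (Ns i).toFun ω {x} ≠ 0}) ∧
    (∀ Q ∈ π.parts, ∀ i ∈ Q, ∀ j ∈ Q,
        ¬ Dissociated P S (Ns i).toFun (Ns j).toFun) := by
  have hcommon : ∀ Q ∈ π.parts, ∀ A : Set X, MeasurableSet A → 0 < μ A → μ A < ⊤ →
      0 < P {ω | ∃ x ∈ A, ∀ i ∈ Q, (Ns i).toFun ω {x} ≠ 0} := by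
    intro Q hQ A hA hμA hμA_fin
    obtain ⟨B, hBA, hB, hμB, hB_bdd⟩ := exists_isBounded_subset_measure_pos hA hμA
    refine (measure_common_atom_pos_of_isBounded (fun i => (Ns i).measurable') hpt hmom hc hlow
      hQ hB hμB ((measure_mono hBA).trans_lt hμA_fin) hB_bdd).trans_le (measure_mono ?_)
    exact fun ω ⟨x, hxB, hx⟩ => ⟨x, hBA hxB, hx⟩
  refine ⟨hcommon, fun Q hQ i hi j hj => not_dissociated_of_measure_common_atom_pos ?_⟩
  obtain ⟨B, -, hB, hμB, hB_bdd⟩ :=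
    exists_isBounded_subset_measure_pos (μ := μ) MeasurableSet.univ (by simp [hμinf])
  refine (hcommon Q hQ B hB hμB (hμbdd B hB_bdd)).trans_le (measure_mono ?_)
  exact fun ω ⟨x, _, hx⟩ => ⟨x, hx i hi, hx j hj⟩

/-- (Graph-measures lemma.) If the joint moment of `N₁,…,N_n` dominates
`c·m_π`, then for each atom `Q` of `π` and each `A ∈ 𝒜_f`, with positive probability the
processes `N_i`, `i ∈ Q`, share a common point in `A`; in particular they are pairwise
not dissociated. -/
theorem stmt3
    {X : Type*} [MeasurableSpace X] [MetricSpace X] [BorelSpace X]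
    [TopologicalSpace.SeparableSpace X] [CompleteSpace X]
    {Ω : Type*} [MeasurableSpace Ω]
    (μ : Measure X) (hμbdd : BddFin μ) (hμcont : IsContinuousM μ) (hμinf : μ Set.univ = ⊤)
    (T : X ≃ X) (hTmeas : Measurable ⇑T) (hTmeas' : Measurable ⇑T.symm)
    (hT : MeasurePreserving ⇑T μ μ)
    (P : Measure Ω) [IsProbabilityMeasure P]
    (S : Ω ≃ Ω) (hS : MeasurePreserving ⇑S P P) (hSerg : Ergodic ⇑S P)
    (n : ℕ) (Ns : Fin n → TRM μ (⇑T) P (⇑S))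
    (hpt : ∀ i, (Ns i).IsPointProc) (hmom : ∀ i, HasAllMoments P (Ns i).toFun)
    (c : ℝ) (hc : 0 < c) (π : Finpartition (Finset.univ : Finset (Fin n)))
    (hlow : ∀ A : Fin n → Set X, (∀ i, MeasurableSet (A i)) →
        (∀ i, 0 < μ (A i)) → (∀ i, μ (A i) < ⊤) →
        ENNReal.ofReal c * mPartVal μ π A ≤ ∫⁻ ω, ∏ i, (Ns i).toFun ω (A i) ∂P) :
    (∀ Q ∈ π.parts, ∀ A : Set X, MeasurableSet A → 0 < μ A → μ A < ⊤ →
        0 < P {ω | ∃ x ∈ A, ∀ i ∈ Q, (Ns i).toFun ω {x} ≠ 0}) ∧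
    (∀ Q ∈ π.parts, ∀ i ∈ Q, ∀ j ∈ Q,
        ¬ Dissociated P S (Ns i).toFun (Ns j).toFun) :=
  stmt3_general μ hμbdd hμinf T P S n Ns hpt hmom c hc π hlow

end PPP
end
end

section
/- Assume that T has the (P) property. If N is a square integrable T-random measure defined on some ergodic probability-preserving system (Ω,ℱ,ℙ,S), whose realizations are almost surely continuous (atomless) measures, then there exists α ≥ 0 such that N is constant and almost surely equal to αμ. -/
open MeasureTheory ENNReal NNReal Set Bornology

noncomputable section

namespace PPP

variable {X Y Ω : Type*} [MeasurableSpace X] [MeasurableSpace Y] [MeasurableSpace Ω]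

/-!
Let `σ(A₀ × A₁) = 𝔼[N(A₀) N(A₁)]` be the second moment measure of `N`. It is a boundedly finite
`T × T`-invariant measure on `X²` whose marginals are absolutely continuous with respect to `μ`,
so by property (P) it is a countable combination of measures `(T^{k₀} × T^{k₁})_* m_π`. As the
realizations of `N` are atomless, `σ` does not charge the graph of any power of `T`, whereas a
component with `π` a single block gives such a graph infinite mass; hence
`𝔼[N(A) N(B)] = c μ(A) μ(B)`. For `0 < μ(A₀) < ∞` this gives
`𝔼[(μ(A₀) N(A) - μ(A) N(A₀))²] = 0`, so `μ(A₀) N(A) = μ(A) N(A₀)` a.s. In particular `N(A₀)` is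
`S`-invariant, hence a.s. constant by ergodicity, and `N = α μ` follows by checking it on a
countable generating π-system.
-/

open ProbabilityTheory

section Moments

variable {P : Measure Ω}

theorem _root_.ENNReal.sq_add_sq_eq_two_mul_add (a b : ℝ≥0∞) :
    a ^ 2 + b ^ 2 = 2 * (a * b) + ((a - b) ^ 2 + (b - a) ^ 2) := by
  wlog hba : b ≤ a generalizing a b
  · rw [add_comm (a ^ 2), mul_comm a, add_comm ((a - b) ^ 2)]
    exact this b a (le_of_not_ge hba)
  rcases eq_or_ne b ⊤ with rfl | hb
  · simp [top_le_iff.mp hba]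
  obtain ⟨d, rfl⟩ : ∃ d, a = b + d := ⟨a - b, (add_tsub_cancel_of_le hba).symm⟩
  rw [ENNReal.add_sub_cancel_left hb, tsub_eq_zero_of_le le_self_add]
  ring

theorem ae_eq_of_lintegral_sq_eq_lintegral_mul {f g : Ω → ℝ≥0∞} (hf : Measurable f)
    (hg : Measurable g) {v : ℝ≥0∞} (hv : v ≠ ⊤) (hff : ∫⁻ ω, f ω ^ 2 ∂P = v)
    (hgg : ∫⁻ ω, g ω ^ 2 ∂P = v) (hfg : ∫⁻ ω, f ω * g ω ∂P = v) : f =ᵐ[P] g := by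
  set I := ∫⁻ ω, ((f ω - g ω) ^ 2 + (g ω - f ω) ^ 2) ∂P
  have hsum : v + v = v + (v + I) := by
    calc v + v = ∫⁻ ω, (f ω ^ 2 + g ω ^ 2) ∂P := by
          rw [lintegral_add_left (hf.pow_const 2), hff, hgg]
      _ = ∫⁻ ω, (2 * (f ω * g ω) + ((f ω - g ω) ^ 2 + (g ω - f ω) ^ 2)) ∂P :=
        lintegral_congr fun ω => ENNReal.sq_add_sq_eq_two_mul_add _ _
      _ = v + (v + I) := by
        rw [lintegral_add_left (f := fun ω => 2 * (f ω * g ω)) ((hf.mul hg).const_mul 2),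
          lintegral_const_mul (f := fun ω => f ω * g ω) 2 (hf.mul hg), hfg, two_mul, add_assoc]
  have hI : I = 0 := by
    refine (ENNReal.add_right_inj hv).mp ?_
    rw [add_zero]
    exact ((ENNReal.add_right_inj hv).mp hsum).symm
  filter_upwards [(lintegral_eq_zero_iff (((hf.sub hg).pow_const 2).add
    ((hg.sub hf).pow_const 2))).mp hI] with ω hω
  simp only [Pi.add_apply, Pi.sub_apply, Pi.zero_apply, add_eq_zero, pow_eq_zero_iff two_ne_zero,
    tsub_eq_zero_iff_le] at hω
  exact le_antisymm hω.1 hω.2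

theorem ae_mul_eq_mul_of_lintegral_eq {f g : Ω → ℝ≥0∞} (hf : Measurable f) (hg : Measurable g)
    {a b c : ℝ≥0∞} (ha : a ≠ ⊤) (hb : b ≠ ⊤) (hc : c ≠ ⊤) (hff : ∫⁻ ω, f ω ^ 2 ∂P = c * a ^ 2)
    (hgg : ∫⁻ ω, g ω ^ 2 ∂P = c * b ^ 2) (hfg : ∫⁻ ω, f ω * g ω ∂P = c * (a * b)) :
    (fun ω => b * f ω) =ᵐ[P] fun ω => a * g ω := by
  refine ae_eq_of_lintegral_sq_eq_lintegral_mul (hf.const_mul b) (hg.const_mul a)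
    (v := c * (a * b) ^ 2) (by finiteness) ?_ ?_ ?_
  · simp_rw [mul_pow, lintegral_const_mul _ (hf.pow_const 2), hff]
    ring
  · simp_rw [mul_pow, lintegral_const_mul _ (hg.pow_const 2), hgg]
    ring
  · simp_rw [mul_mul_mul_comm b]
    rw [lintegral_const_mul (f := fun ω => f ω * g ω) _ (hf.mul hg), hfg]
    ring

end Moments

theorem _root_.Set.Countable.generatePiSystem {α : Type*} {S : Set (Set α)} (hS : S.Countable) :
    (generatePiSystem S).Countable := by
  refine ((Set.countable_ofPred_finite_subset hS).image Set.sInter).mono fun s hs => ?_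
  induction hs with
  | base h =>
    exact ⟨{_}, ⟨Set.finite_singleton _, Set.singleton_subset_iff.mpr h⟩, Set.sInter_singleton _⟩
  | inter _ _ _ ih₁ ih₂ =>
    obtain ⟨t₁, ⟨ht₁, ht₁S⟩, rfl⟩ := ih₁
    obtain ⟨t₂, ⟨ht₂, ht₂S⟩, rfl⟩ := ih₂
    exact ⟨t₁ ∪ t₂, ⟨ht₁.union ht₂, Set.union_subset ht₁S ht₂S⟩, Set.sInter_union t₁ t₂⟩

section RandomMeasures

variable {P : Measure Ω}

theorem ae_eq_of_forall_ae_apply_inter_eq [MeasurableSpace.CountablyGenerated X]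
    {ν : Ω → Measure X} {ρ : Measure X} {D : ℕ → Set X} (hcover : ⋃ n, D n = univ)
    (hρD : ∀ n, ρ (D n) ≠ ⊤)
    (h : ∀ n s, MeasurableSet s → ∀ᵐ ω ∂P, ν ω (s ∩ D n) = ρ (s ∩ D n)) :
    ∀ᵐ ω ∂P, ν ω = ρ := by
  set C := generatePiSystem (MeasurableSpace.countableGeneratingSet X)
  have hC : C.Countable := MeasurableSpace.countable_countableGeneratingSet.generatePiSystem
  have hCmeas : ∀ s ∈ C, MeasurableSet s :=
    generatePiSystem_measurableSet fun _ => MeasurableSpace.measurableSet_countableGeneratingSet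
  have hall : ∀ᵐ ω ∂P, ∀ n, (∀ s ∈ C, ν ω (s ∩ D n) = ρ (s ∩ D n)) ∧ ν ω (D n) = ρ (D n) := by
    refine ae_all_iff.2 fun n => ((ae_ball_iff hC).2 fun s hs => h n s (hCmeas s hs)).and ?_
    simpa using h n univ MeasurableSet.univ
  filter_upwards [hall] with ω hω
  refine (Measure.ext_of_generateFrom_of_cover (T := range D)
    (by rw [generateFrom_generatePiSystem_eq, MeasurableSpace.generateFrom_countableGeneratingSet])
    (countable_range D) (isPiSystem_generatePiSystem _) (by rwa [sUnion_range]) ?_ ?_ ?_).symm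
  · rintro _ ⟨n, rfl⟩
    exact hρD n
  · rintro _ ⟨n, rfl⟩ s hs
    exact ((hω n).1 s hs).symm
  · rintro _ ⟨n, rfl⟩
    exact ((hω n).2).symm

end RandomMeasures

section SFinite

theorem _root_.ProbabilityTheory.Kernel.isSFiniteKernel_of_forall_lt_top {κ : Kernel Ω X}
    {D : ℕ → Set X} (hD : ∀ n, MeasurableSet (D n)) (hcover : ⋃ n, D n = univ)
    (hfin : ∀ ω n, κ ω (D n) < ⊤) : IsSFiniteKernel κ := by
  classical
  set R := disjointed D
  have hR : ∀ n, MeasurableSet (R n) := MeasurableSet.disjointed hD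
  have hRfin : ∀ ω n, κ ω (R n) ≠ ⊤ :=
    fun ω n => (lt_of_le_of_lt (measure_mono (disjointed_subset D n)) (hfin ω n)).ne
  -- split `κ` on `R n` according to the integer part of the mass `κ ω (R n)`
  set level : ℕ → ℕ → Set Ω := fun n m => {ω | ⌊(κ ω (R n)).toNNReal⌋₊ = m}
  have hlevel : ∀ n m, MeasurableSet (level n m) := fun n m =>
    (((κ.measurable_coe (hR n)).ennreal_toNNReal).nat_floor) (measurableSet_singleton m)
  set ρ : ℕ × ℕ → Kernel Ω X :=
    fun p => Kernel.piecewise (hlevel p.1 p.2) (κ.restrict (hR p.1)) 0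
  have hρ : ∀ p, IsFiniteKernel (ρ p) := fun p => by
    refine ⟨⟨p.2 + 1, ENNReal.add_lt_top.2 ⟨ENNReal.natCast_lt_top _, ENNReal.one_lt_top⟩,
      fun ω => ?_⟩⟩
    simp only [ρ, Kernel.piecewise_apply, Kernel.restrict_apply]
    split_ifs with h
    · rw [Measure.restrict_apply_univ, ← ENNReal.coe_toNNReal (hRfin ω p.1), ← h]
      exact_mod_cast (Nat.lt_floor_add_one _).le
    · simp
  have hκ : κ = Kernel.sum ρ := by
    ext ω s hs
    rw [Kernel.sum_apply' ρ ω hs, ENNReal.tsum_prod']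
    have hlevel_sum : ∀ n, ∑' m, ρ (n, m) ω s = κ ω (s ∩ R n) := fun n => by
      rw [tsum_eq_single ⌊(κ ω (R n)).toNNReal⌋₊ fun m hm => ?_]
      · simp [ρ, level, Kernel.piecewise_apply, Kernel.restrict_apply, Measure.restrict_apply hs]
      · simp [ρ, level, Kernel.piecewise_apply, Ne.symm hm]
    rw [tsum_congr hlevel_sum, ← measure_iUnion
      (fun i j hij => ((disjoint_disjointed D) hij).mono inter_subset_right inter_subset_right)
      (fun n => hs.inter (hR n)), ← inter_iUnion, iUnion_disjointed, hcover, inter_univ]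
  rw [hκ]
  exact Kernel.isSFiniteKernel_sum

theorem exists_isSFiniteKernel_ae_eq {P : Measure Ω} {G : Ω → Measure X} (hG : Measurable G)
    {D : ℕ → Set X} (hD : ∀ n, MeasurableSet (D n)) (hcover : ⋃ n, D n = univ)
    (hfin : ∀ᵐ ω ∂P, ∀ n, G ω (D n) < ⊤) :
    ∃ κ : Kernel Ω X, IsSFiniteKernel κ ∧ ∀ᵐ ω ∂P, κ ω = G ω := by
  classical
  have hgood : MeasurableSet {ω | ∀ n, G ω (D n) < ⊤} := by
    simp only [ofPred_forall]
    exact .iInter fun n =>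
      measurableSet_lt ((Measure.measurable_coe (hD n)).comp hG) measurable_const
  refine ⟨Kernel.piecewise hgood ⟨G, hG⟩ 0, Kernel.isSFiniteKernel_of_forall_lt_top hD hcover
    fun ω n => ?_, ?_⟩
  · by_cases h : ∀ n, G ω (D n) < ⊤ <;> simp [Kernel.piecewise_apply, h]
  · filter_upwards [hfin] with ω h
    simp [Kernel.piecewise_apply, h]

end SFinite

section SecondMoment

variable (P : Measure Ω) (κ : Kernel Ω X) [IsSFiniteKernel κ]

/-- The second moment measure `A₀ × A₁ ↦ 𝔼[κ(A₀) κ(A₁)]` of `κ`, as a measure on `Fin 2 → X`. -/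
def secondMomentMeasure : Measure (Fin 2 → X) :=
  (P.bind (κ ×ₖ κ)).map (MeasurableEquiv.piFinTwo fun _ => X).symm

variable {P κ}

theorem secondMomentMeasure_apply {s : Set (Fin 2 → X)} (hs : MeasurableSet s) :
    secondMomentMeasure P κ s =
      ∫⁻ ω, (κ ω).prod (κ ω) ((MeasurableEquiv.piFinTwo fun _ => X).symm ⁻¹' s) ∂P := by
  rw [secondMomentMeasure, MeasurableEquiv.map_apply, Measure.bind_apply
    ((MeasurableEquiv.measurable _) hs) (κ ×ₖ κ).measurable.aemeasurable]
  simp_rw [Kernel.prod_apply]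

theorem secondMomentMeasure_pi {A : Fin 2 → Set X} (hA : ∀ i, MeasurableSet (A i)) :
    secondMomentMeasure P κ (univ.pi A) = ∫⁻ ω, κ ω (A 0) * κ ω (A 1) ∂P := by
  have hpre : (MeasurableEquiv.piFinTwo fun _ => X).symm ⁻¹' univ.pi A = A 0 ×ˢ A 1 := by
    ext p
    simp [Fin.forall_fin_two, MeasurableEquiv.piFinTwo, piFinTwoEquiv]
  simp_rw [secondMomentMeasure_apply (MeasurableSet.univ_pi hA), hpre, Measure.prod_prod]

theorem secondMomentMeasure_graph_eq_zero [MeasurableEq X]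
    (hatomless : ∀ᵐ ω ∂P, ∀ x, κ ω {x} = 0) {g : X → X} (hg : Measurable g) :
    secondMomentMeasure P κ {x | x 1 = g (x 0)} = 0 := by
  have hgraph : MeasurableSet {x : Fin 2 → X | x 1 = g (x 0)} :=
    measurableSet_eq_fun (measurable_pi_apply 1) (hg.comp (measurable_pi_apply 0))
  rw [secondMomentMeasure_apply hgraph]
  refine lintegral_eq_zero_of_ae_eq_zero ?_
  filter_upwards [hatomless] with ω hω
  rw [Pi.zero_apply, Measure.prod_apply ((MeasurableEquiv.measurable _) hgraph)]
  exact lintegral_eq_zero_of_ae_eq_zero (ae_of_all _ fun x => by simp [hω])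

theorem measurePreserving_piMap_secondMomentMeasure {S : Ω → Ω} (hS : MeasurePreserving S P P)
    {T : X → X} (hT : Measurable T) (hκ : ∀ᵐ ω ∂P, κ (S ω) = (κ ω).map T) :
    MeasurePreserving (piMap T 2) (secondMomentMeasure P κ) (secondMomentMeasure P κ) := by
  have hTT : Measurable (piMap T 2) :=
    measurable_pi_lambda _ fun i => hT.comp (measurable_pi_apply i)
  refine ⟨hTT, Measure.ext fun s hs => ?_⟩
  have hmeas : Measurable fun ω =>
      (κ ω).prod (κ ω) ((MeasurableEquiv.piFinTwo fun _ => X).symm ⁻¹' s) := by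
    simpa only [Kernel.prod_apply] using
      (κ ×ₖ κ).measurable_coe ((MeasurableEquiv.measurable _) hs)
  rw [Measure.map_apply hTT hs, secondMomentMeasure_apply (hTT hs), secondMomentMeasure_apply hs,
    ← hS.lintegral_comp hmeas]
  refine lintegral_congr_ae ?_
  filter_upwards [hκ] with ω hω
  rw [hω, Measure.map_prod_map _ _ hT hT, Measure.map_apply (hT.prodMap hT)
    ((MeasurableEquiv.measurable _) hs)]
  congr 1
  ext p
  refine iff_of_eq (congrArg (· ∈ s) (funext fun i => ?_))
  fin_cases i <;> rfl

theorem secondMomentMeasure_map_eval_absolutelyContinuous {μ : Measure X}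
    (hnull : ∀ s, MeasurableSet s → μ s = 0 → ∀ᵐ ω ∂P, κ ω s = 0) (i : Fin 2) :
    (secondMomentMeasure P κ).map (fun x => x i) ≪ μ := by
  refine Measure.AbsolutelyContinuous.mk fun s hs hμs => ?_
  rw [Measure.map_apply (measurable_pi_apply i) hs, ← univ_pi_update_univ,
    secondMomentMeasure_pi fun j => by
      rcases eq_or_ne j i with rfl | hj <;> simp [*]]
  refine lintegral_eq_zero_of_ae_eq_zero ?_
  filter_upwards [hnull s hs hμs] with ω hω
  fin_cases i <;> simp [hω]

theorem secondMomentMeasure_lt_top_of_isBounded [PseudoMetricSpace X] [OpensMeasurableSpace X]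
    (h2 : HasMoment P (fun ω => κ ω) 2) {B : Set (Fin 2 → X)} (hB : IsBounded B) :
    secondMomentMeasure P κ B < ⊤ := by
  rcases B.eq_empty_or_nonempty with rfl | ⟨x, -⟩
  · simp
  obtain ⟨r, hr, hBr⟩ := hB.subset_closedBall_lt 0 x
  set C := Metric.closedBall (x 0) r ∪ Metric.closedBall (x 1) r
  have hC : MeasurableSet C := measurableSet_closedBall.union measurableSet_closedBall
  have hBC : B ⊆ univ.pi fun _ => C := by
    refine hBr.trans ((closedBall_pi x hr.le).trans_subset (pi_mono fun i _ => ?_))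
    fin_cases i
    exacts [subset_union_left, subset_union_right]
  calc secondMomentMeasure P κ B ≤ secondMomentMeasure P κ (univ.pi fun _ => C) :=
        measure_mono hBC
    _ = ∫⁻ ω, κ ω C ^ 2 ∂P := by rw [secondMomentMeasure_pi fun _ => hC]; simp_rw [sq]
    _ < ⊤ := h2 C (Metric.isBounded_closedBall.union Metric.isBounded_closedBall) hC

end SecondMoment

theorem _root_.Equiv.Perm.measurePreserving_zpow {μ : Measure X} {σ : Equiv.Perm X}
    (h : MeasurePreserving σ μ μ) (h' : MeasurePreserving σ.symm μ μ) :
    ∀ k : ℤ, MeasurePreserving ⇑(σ ^ k) μ μ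
  | (n : ℕ) => by simpa only [zpow_natCast, Equiv.Perm.coe_pow] using h.iterate n
  | .negSucc n => by
    simpa only [zpow_negSucc, Equiv.Perm.coe_pow, ← Equiv.Perm.inv_def] using! h'.iterate (n + 1)

section PartitionMeasures

variable {μ : Measure X}

def partDiag {n : ℕ} (π : Finpartition (Finset.univ : Finset (Fin n))) :
    ({Q // Q ∈ π.parts} → X) → Fin n → X :=
  fun y i => y ⟨π.part i, π.part_mem.2 (Finset.mem_univ i)⟩

theorem measurable_partDiag {n : ℕ} (π : Finpartition (Finset.univ : Finset (Fin n))) :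
    Measurable (partDiag (X := X) π) :=
  measurable_pi_lambda _ fun _ => measurable_pi_apply _

theorem mPartMeasure_apply {n : ℕ} (π : Finpartition (Finset.univ : Finset (Fin n)))
    {s : Set (Fin n → X)} (hs : MeasurableSet s) :
    mPartMeasure μ π s = Measure.pi (fun _ => μ) (partDiag π ⁻¹' s) :=
  Measure.map_apply (measurable_partDiag π) hs

theorem mPartMeasure_pi [SigmaFinite μ] {n : ℕ}
    (π : Finpartition (Finset.univ : Finset (Fin n))) {A : Fin n → Set X}
    (hA : ∀ i, MeasurableSet (A i)) :
    mPartMeasure μ π (univ.pi A) = mPartVal μ π A := by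
  have hpre : partDiag π ⁻¹' univ.pi A = univ.pi fun Q => ⋂ i ∈ Q.1, A i := by
    ext y
    simp only [partDiag, mem_preimage, mem_univ_pi, mem_iInter]
    refine ⟨fun hy Q i hi => ?_, fun hy i => hy _ i (π.mem_part (Finset.mem_univ i))⟩
    rw [show Q = ⟨π.part i, _⟩ from Subtype.ext (π.part_eq_of_mem Q.2 hi).symm]
    exact hy i
  rw [mPartMeasure_apply π (MeasurableSet.univ_pi hA), hpre, Measure.pi_pi, mPartVal]
  exact Finset.prod_coe_sort π.parts fun Q => μ (⋂ i ∈ Q, A i)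

theorem mPartMeasure_setOf_eq_eq_top [MeasurableEq X] [SigmaFinite μ] (hμ : μ univ = ⊤) {n : ℕ}
    (π : Finpartition (Finset.univ : Finset (Fin n))) {i j : Fin n} (hij : π.part i = π.part j) :
    mPartMeasure μ π {x | x i = x j} = ⊤ := by
  have : Nonempty {Q // Q ∈ π.parts} := ⟨⟨π.part i, π.part_mem.2 (Finset.mem_univ i)⟩⟩
  have hpre : partDiag π ⁻¹' {x : Fin n → X | x i = x j} = univ := by
    ext y
    simp [partDiag, hij]
  rw [mPartMeasure_apply π (measurableSet_eq_fun (measurable_pi_apply i) (measurable_pi_apply j)),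
    hpre, Measure.pi_univ, Finset.prod_const, hμ, ENNReal.top_pow Finset.univ_nonempty.card_ne_zero]

theorem mPartVal_fin_two_of_part_ne (π : Finpartition (Finset.univ : Finset (Fin 2)))
    (hπ : π.part 0 ≠ π.part 1) (A : Fin 2 → Set X) : mPartVal μ π A = μ (A 0) * μ (A 1) := by
  have hpart : ∀ i, π.part i = {i} := fun i => Finset.eq_singleton_iff_unique_mem.2
    ⟨π.mem_part (Finset.mem_univ i), fun j hj => by
      by_contra hji
      have := π.part_eq_of_mem (π.part_mem.2 (Finset.mem_univ i)) hj
      fin_cases i <;> fin_cases j <;> simp_all [eq_comm]⟩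
  have hparts : π.parts = {π.part 0, π.part 1} := by
    ext Q
    refine ⟨fun hQ => ?_, fun hQ => ?_⟩
    · obtain ⟨i, hi⟩ := π.nonempty_of_mem_parts hQ
      rw [← π.part_eq_of_mem hQ hi]
      fin_cases i <;> simp
    · rcases Finset.mem_insert.1 hQ with rfl | hQ
      · exact π.part_mem.2 (Finset.mem_univ 0)
      · exact (Finset.mem_singleton.1 hQ) ▸ π.part_mem.2 (Finset.mem_univ 1)
  rw [mPartVal, hparts, Finset.prod_pair hπ, hpart, hpart]
  simp

section Components

variable {T : X ≃ X} (hTk : ∀ k : ℤ, MeasurePreserving ⇑((T : Equiv.Perm X) ^ k) μ μ)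
include hTk

theorem measurable_zpowPiMap {n : ℕ} (k : Fin n → ℤ) : Measurable (zpowPiMap T k) :=
  measurable_pi_lambda _ fun i => (hTk (k i)).measurable.comp (measurable_pi_apply i)

theorem measurableSet_graph_zpow [MeasurableEq X] (k : ℤ) :
    MeasurableSet {x : Fin 2 → X | x 1 = ((T : Equiv.Perm X) ^ k) (x 0)} :=
  measurableSet_eq_fun (measurable_pi_apply 1) ((hTk k).measurable.comp (measurable_pi_apply 0))

theorem map_zpowPiMap_mPartMeasure_pi [SigmaFinite μ]
    {π : Finpartition (Finset.univ : Finset (Fin 2))} (hπ : π.part 0 ≠ π.part 1) (k : Fin 2 → ℤ)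
    {A : Fin 2 → Set X} (hA : ∀ i, MeasurableSet (A i)) :
    (mPartMeasure μ π).map (zpowPiMap T k) (univ.pi A) = μ (A 0) * μ (A 1) := by
  have hpre : zpowPiMap T k ⁻¹' univ.pi A =
      univ.pi fun i => ⇑((T : Equiv.Perm X) ^ k i) ⁻¹' A i := by
    ext x
    simp [zpowPiMap]
  rw [Measure.map_apply (measurable_zpowPiMap hTk k) (MeasurableSet.univ_pi hA), hpre,
    mPartMeasure_pi π fun i => (hTk (k i)).measurable (hA i), mPartVal_fin_two_of_part_ne π hπ,
    (hTk (k 0)).measure_preimage (hA 0).nullMeasurableSet,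
    (hTk (k 1)).measure_preimage (hA 1).nullMeasurableSet]

theorem map_zpowPiMap_mPartMeasure_graph_eq_top [MeasurableEq X] [SigmaFinite μ] (hμ : μ univ = ⊤)
    {π : Finpartition (Finset.univ : Finset (Fin 2))} (hπ : π.part 0 = π.part 1) (k : Fin 2 → ℤ) :
    (mPartMeasure μ π).map (zpowPiMap T k)
      {x | x 1 = ((T : Equiv.Perm X) ^ (k 1 - k 0)) (x 0)} = ⊤ := by
  rw [Measure.map_apply (measurable_zpowPiMap hTk k) (measurableSet_graph_zpow hTk _), ← top_le_iff,
    ← mPartMeasure_setOf_eq_eq_top hμ π hπ]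
  refine measure_mono fun x (hx : x 0 = x 1) => ?_
  simp only [zpowPiMap, mem_preimage, mem_ofPred_eq, hx, ← Equiv.Perm.mul_apply, ← zpow_add,
    sub_add_cancel]

theorem PropertyP.exists_apply_pi_eq [MetricSpace X] [MeasurableEq X] [SigmaFinite μ]
    (hP : PropertyP μ T) (hμ : μ univ = ⊤) {σ : Measure (Fin 2 → X)}
    (hbdd : ∀ B : Set (Fin 2 → X), IsBounded B → σ B < ⊤)
    (hac : ∀ i : Fin 2, σ.map (fun x => x i) ≪ μ) (hinv : MeasurePreserving (piMap T 2) σ σ)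
    (hgraph : ∀ k : ℤ, σ {x | x 1 = ((T : Equiv.Perm X) ^ k) (x 0)} = 0) :
    ∃ c : ℝ≥0∞, ∀ A : Fin 2 → Set X, (∀ i, MeasurableSet (A i)) →
      σ (univ.pi A) = c * (μ (A 0) * μ (A 1)) := by
  obtain ⟨-, c, πs, ks, -, rfl⟩ := hP 2 (by norm_num) σ hbdd hac hinv
  refine ⟨∑' j, c j, fun A hA => ?_⟩
  rw [Measure.sum_apply _ (MeasurableSet.univ_pi hA), ← ENNReal.tsum_mul_right]
  refine tsum_congr fun j => ?_
  rw [Measure.smul_apply, smul_eq_mul]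
  by_cases hπ : (πs j).part 0 = (πs j).part 1
  · suffices c j = 0 by simp [this]
    have h := hgraph (ks j 1 - ks j 0)
    rw [Measure.sum_apply _ (measurableSet_graph_zpow hTk _), ENNReal.tsum_eq_zero] at h
    simpa [map_zpowPiMap_mPartMeasure_graph_eq_top hTk hμ hπ] using h j
  · rw [map_zpowPiMap_mPartMeasure_pi hTk hπ (ks j) hA]

end Components

end PartitionMeasures

theorem _root_.Equiv.measurePreserving_symm [StandardBorelSpace X] {μ : Measure X} {T : X ≃ X}
    (hT : MeasurePreserving T μ μ) : MeasurePreserving T.symm μ μ := by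
  let e : X ≃ᵐ X :=
    { toEquiv := T
      measurable_toFun := hT.measurable
      measurable_invFun := fun s hs => by
        rw [← T.image_eq_preimage_symm]
        exact (hT.measurable.measurableEmbedding T.injective).measurableSet_image.2 hs }
  exact MeasurePreserving.symm e hT

theorem _root_.Ergodic.exists_ae_apply_eq_mul {P : Measure Ω} {S : Ω → Ω} (hS : Ergodic S P)
    {μ : Measure X} {T : X → X} (hT : MeasurePreserving T μ μ) {G : Ω → Measure X}
    (hG : Measurable G)
    (hequiv : ∀ᵐ ω ∂P, G (S ω) = (G ω).map T) {c : ℝ≥0∞}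
    (hmom : ∀ A B, MeasurableSet A → MeasurableSet B →
      ∫⁻ ω, G ω A * G ω B ∂P = c * (μ A * μ B))
    {A₀ : Set X} (hA₀ : MeasurableSet A₀) (hμA₀ : μ A₀ ≠ 0) (hμA₀' : μ A₀ ≠ ⊤)
    (hsq : ∫⁻ ω, G ω A₀ ^ 2 ∂P < ⊤) :
    ∃ α : ℝ≥0, ∀ s, MeasurableSet s → μ s ≠ ⊤ → ∀ᵐ ω ∂P, G ω s = α * μ s := by
  have hGm : ∀ {s}, MeasurableSet s → Measurable fun ω => G ω s :=
    fun hs => (Measure.measurable_coe hs).comp hG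
  have hsq' : ∀ {s}, MeasurableSet s → ∫⁻ ω, G ω s ^ 2 ∂P = c * μ s ^ 2 := fun hs => by
    simp_rw [sq, hmom _ _ hs hs]
  have hc : c ≠ ⊤ := by
    rintro rfl
    rw [hsq' hA₀, ENNReal.top_mul (pow_ne_zero 2 hμA₀)] at hsq
    exact lt_irrefl _ hsq
  have hprop : ∀ s, MeasurableSet s → μ s ≠ ⊤ → ∀ᵐ ω ∂P, μ A₀ * G ω s = μ s * G ω A₀ :=
    fun s hs hμs => ae_mul_eq_mul_of_lintegral_eq (hGm hs) (hGm hA₀) hμs hμA₀' hc (hsq' hs)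
      (hsq' hA₀) (hmom _ _ hs hA₀)
  have hinv : (fun ω => G ω A₀) ∘ S =ᵐ[P] fun ω => G ω A₀ := by
    have hpre := hT.measure_preimage hA₀.nullMeasurableSet
    filter_upwards [hequiv, hprop _ (hT.measurable hA₀) (hpre ▸ hμA₀')] with ω hω hωA₀
    rw [Function.comp_apply, hω, Measure.map_apply hT.measurable hA₀]
    rwa [hpre, ENNReal.mul_right_inj hμA₀ hμA₀'] at hωA₀
  obtain ⟨z, hz⟩ := hS.ae_eq_const_of_ae_eq_comp₀ (hGm hA₀).nullMeasurable hinv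
  refine ⟨(z / μ A₀).toNNReal, fun s hs hμs => ?_⟩
  have hfin : ∀ᵐ ω ∂P, G ω A₀ ^ 2 < ⊤ := ae_lt_top' ((hGm hA₀).pow_const 2).aemeasurable hsq.ne
  filter_upwards [hprop s hs hμs, hz, hfin] with ω hωs hωz hωfin
  have hz : z ≠ ⊤ := by
    rintro rfl
    simp [hωz] at hωfin
  rw [hωz, Function.const_apply] at hωs
  rw [ENNReal.coe_toNNReal (ENNReal.div_ne_top hz hμA₀), ← ENNReal.mul_right_inj hμA₀ hμA₀',
    hωs, ← mul_assoc, ENNReal.mul_div_cancel hμA₀ hμA₀', mul_comm]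

theorem BddFin.isLocallyFiniteMeasure [PseudoMetricSpace X] {μ : Measure X} (hμ : BddFin μ) :
    IsLocallyFiniteMeasure μ :=
  ⟨fun x => ⟨Metric.ball x 1, Metric.ball_mem_nhds x one_pos, hμ _ Metric.isBounded_ball⟩⟩

theorem TRM.exists_lintegral_mul_eq [MetricSpace X] [OpensMeasurableSpace X] [MeasurableEq X]
    {μ : Measure X} [SigmaFinite μ] {T : X ≃ X} {P : Measure Ω} {S : Ω → Ω} (N : TRM μ (⇑T) P S)
    (hP : PropertyP μ T)
    (hμ : μ univ = ⊤) (hTk : ∀ k : ℤ, MeasurePreserving ⇑((T : Equiv.Perm X) ^ k) μ μ)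
    (hS : MeasurePreserving S P P) (hsq : HasMoment P N.toFun 2)
    (hcont : ∀ᵐ ω ∂P, IsContinuousM (N.toFun ω)) :
    ∃ c : ℝ≥0∞, ∀ A B, MeasurableSet A → MeasurableSet B →
      ∫⁻ ω, N.toFun ω A * N.toFun ω B ∂P = c * (μ A * μ B) := by
  obtain ⟨x₀, -⟩ := nonempty_of_measure_ne_zero (hμ.trans_ne ENNReal.top_ne_zero)
  obtain ⟨κ, hκ, hκN⟩ := exists_isSFiniteKernel_ae_eq N.measurable'
    (fun _ => measurableSet_closedBall) (Metric.iUnion_closedBall_nat x₀)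
    (by filter_upwards [N.bddFin'] with ω h n using h _ Metric.isBounded_closedBall)
  have hκS : ∀ᵐ ω ∂P, κ (S ω) = (κ ω).map T := by
    filter_upwards [hκN, hS.quasiMeasurePreserving.ae hκN, N.equivariant'] with ω h h' hN
    rw [h', hN, h]
  have hκsq : HasMoment P (fun ω => κ ω) 2 := fun A hA hA' => by
    rw [lintegral_congr_ae (by filter_upwards [hκN] with ω h using by rw [h])]
    exact hsq A hA hA'
  have hnull : ∀ s, MeasurableSet s → μ s = 0 → ∀ᵐ ω ∂P, κ ω s = 0 := fun s hs hμs => by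
    filter_upwards [hκN, N.null' s hs hμs] with ω h h' using h ▸ h'
  have hatomless : ∀ᵐ ω ∂P, ∀ x, κ ω {x} = 0 := by
    filter_upwards [hκN, hcont] with ω h h' using h ▸ h'
  have hTmeas : Measurable T := by simpa using (hTk 1).measurable
  obtain ⟨c, hc⟩ := hP.exists_apply_pi_eq hTk hμ
    (fun B hB => secondMomentMeasure_lt_top_of_isBounded hκsq hB)
    (secondMomentMeasure_map_eval_absolutelyContinuous hnull)
    (measurePreserving_piMap_secondMomentMeasure hS hTmeas hκS)
    (fun k => secondMomentMeasure_graph_eq_zero hatomless (hTk k).measurable)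
  refine ⟨c, fun A B hA hB => ?_⟩
  have hAB := hc ![A, B] (Fin.forall_fin_two.2 ⟨hA, hB⟩)
  rw [secondMomentMeasure_pi (Fin.forall_fin_two.2 ⟨hA, hB⟩)] at hAB
  simp only [Matrix.cons_val_zero, Matrix.cons_val_one] at hAB
  rw [← hAB]
  exact lintegral_congr_ae (by filter_upwards [hκN] with ω h using by simp [h])

theorem stmt7_general
    {X : Type*} [MeasurableSpace X] [MetricSpace X] [BorelSpace X]
    [TopologicalSpace.SeparableSpace X] [CompleteSpace X]
    {Ω : Type*} [MeasurableSpace Ω]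
    (μ : Measure X) (hμbdd : BddFin μ) (hμinf : μ Set.univ = ⊤)
    (T : X ≃ X)
    (hT : MeasurePreserving ⇑T μ μ)
    (hP : PropertyP μ T)
    (P : Measure Ω)
    (S : Ω ≃ Ω) (hSerg : Ergodic ⇑S P)
    (N : TRM μ (⇑T) P (⇑S)) (hsq : HasMoment P N.toFun 2)
    (hcont : ∀ᵐ ω ∂P, IsContinuousM (N.toFun ω)) :
    ∃ α : ℝ≥0, ∀ᵐ ω ∂P, N.toFun ω = (α : ℝ≥0∞) • μ := by
  have : SecondCountableTopology X := UniformSpace.secondCountable_of_separable X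
  have := hμbdd.isLocallyFiniteMeasure
  obtain ⟨x₀, -⟩ := nonempty_of_measure_ne_zero (hμinf.trans_ne ENNReal.top_ne_zero)
  have hTk := Equiv.Perm.measurePreserving_zpow hT (Equiv.measurePreserving_symm hT)
  obtain ⟨c, hmom⟩ := N.exists_lintegral_mul_eq hP hμinf hTk hSerg.toMeasurePreserving hsq hcont
  obtain ⟨n, hn⟩ : ∃ n : ℕ, μ (Metric.closedBall x₀ n) ≠ 0 := by
    by_contra! h
    simpa [Metric.iUnion_closedBall_nat, hμinf] using measure_iUnion_null h
  have hfin : ∀ n : ℕ, μ (Metric.closedBall x₀ n) ≠ ⊤ :=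
    fun n => (hμbdd _ Metric.isBounded_closedBall).ne
  obtain ⟨α, hα⟩ := hSerg.exists_ae_apply_eq_mul hT N.measurable' N.equivariant' hmom
    measurableSet_closedBall hn (hfin n)
    (hsq _ Metric.isBounded_closedBall measurableSet_closedBall)
  refine ⟨α, ae_eq_of_forall_ae_apply_inter_eq (Metric.iUnion_closedBall_nat x₀)
    (fun n => by simpa using ENNReal.mul_ne_top ENNReal.coe_ne_top (hfin n)) fun n s hs => ?_⟩
  simpa using hα _ (hs.inter measurableSet_closedBall)
    (measure_ne_top_of_subset inter_subset_right (hfin n))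

/-- If `T` has property (P), any square integrable ergodic `T`-random measure
with a.s. continuous realizations is a.s. equal to `α·μ` for some constant `α ≥ 0`. -/
theorem stmt7
    {X : Type*} [MeasurableSpace X] [MetricSpace X] [BorelSpace X]
    [TopologicalSpace.SeparableSpace X] [CompleteSpace X]
    {Ω : Type*} [MeasurableSpace Ω]
    (μ : Measure X) (hμbdd : BddFin μ) (hμcont : IsContinuousM μ) (hμinf : μ Set.univ = ⊤)
    (T : X ≃ X) (hTmeas : Measurable ⇑T) (hTmeas' : Measurable ⇑T.symm)
    (hT : MeasurePreserving ⇑T μ μ)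
    (hP : PropertyP μ T)
    (P : Measure Ω) [IsProbabilityMeasure P]
    (S : Ω ≃ Ω) (hS : MeasurePreserving ⇑S P P) (hSerg : Ergodic ⇑S P)
    (N : TRM μ (⇑T) P (⇑S)) (hsq : HasMoment P N.toFun 2)
    (hcont : ∀ᵐ ω ∂P, IsContinuousM (N.toFun ω)) :
    ∃ α : ℝ≥0, ∀ᵐ ω ∂P, N.toFun ω = (α : ℝ≥0∞) • μ :=
  stmt7_general μ hμbdd hμinf T hT hP P S hSerg N hsq hcont

end PPP
end
end

section
/- Assume that T has the (P) property. If N is a T-random measure defined on some ergodic probability-preserving system (Ω,ℱ,ℙ,S) whose realizations are almost surely absolutely continuous with respect to μ, then there exists α ∈ [0,+∞] such that N is constant and almost surely equal to αμ (no moment hypothesis is required). -/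
open MeasureTheory ENNReal NNReal Set Bornology

noncomputable section

namespace PPP

variable {X Y Ω : Type*} [MeasurableSpace X] [MeasurableSpace Y] [MeasurableSpace Ω]

/-!
Write `N ω = f ω • μ` with `f` jointly measurable and truncate, `g = min f m`. The second moment
measure `σ(A × B) = E[∫_A g ∫_B g]` is boundedly finite, absolutely continuous with respect to
`μ ⊗ μ` and `T × T`-invariant, so by property (P) it is a countable combination of the measures
`(T^k × T^l)_* m_π`. For the partition into singletons this is `μ ⊗ μ`; for the trivial partition it
lives on the graph of a power of `T`, which `μ ⊗ μ` does not charge because `μ` is atomless. Hence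
`σ = β • μ ⊗ μ`, and `Z_A = ∫_A g` satisfies `E[Z_A Z_B] = β μ(A) μ(B)`. Comparing second moments
gives `Z_A μ(A₀) = Z_{A₀} μ(A)` almost surely; `Z_{A₀}` is `S`-invariant, hence constant by
ergodicity, so `Z_A = α μ(A)` almost surely for the sets `A` of a countable generating π-system,
i.e. `g ω = α` a.e. Letting `m → ∞` gives `N = (⨆ m, α_m) • μ`.
-/

open ProbabilityTheory Function

-- With truncated subtraction, one of `a - b` and `b - a` is `0` and the other is `|a - b|`.
theorem ENNReal.mul_self_add_mul_self_eq (a b : ℝ≥0∞) :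
    a * a + b * b = 2 * (a * b) + ((a - b) * (a - b) + (b - a) * (b - a)) := by
  wlog hab : a ≤ b generalizing a b
  · have := this b a (le_of_not_ge hab)
    rw [mul_comm b a] at this
    rw [add_comm (a * a), this, add_comm ((b - a) * (b - a))]
  rcases eq_or_ne a ⊤ with rfl | ha
  · simp [top_le_iff.1 hab]
  obtain ⟨d, rfl⟩ := le_iff_exists_add.1 hab
  rw [tsub_eq_zero_of_le hab, ENNReal.add_sub_cancel_left ha]
  ring

theorem ae_eq_of_lintegral_mul_eq {μ : Measure X} {a b : X → ℝ≥0∞} (ha : Measurable a)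
    (hb : Measurable b) (hab : ∫⁻ x, a x * b x ∂μ ≠ ⊤)
    (haa : ∫⁻ x, a x * a x ∂μ = ∫⁻ x, a x * b x ∂μ)
    (hbb : ∫⁻ x, b x * b x ∂μ = ∫⁻ x, a x * b x ∂μ) : a =ᵐ[μ] b := by
  have hdev : ∫⁻ x, (a x - b x) * (a x - b x) + (b x - a x) * (b x - a x) ∂μ = 0 := by
    have h := lintegral_congr (μ := μ) fun x => ENNReal.mul_self_add_mul_self_eq (a x) (b x)
    rw [lintegral_add_left (f := fun x => a x * a x) (ha.mul ha), haa, hbb,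
      lintegral_add_left (f := fun x => 2 * (a x * b x)) ((ha.mul hb).const_mul 2),
      lintegral_const_mul (f := fun x => a x * b x) _ (ha.mul hb), two_mul] at h
    exact (ENNReal.add_right_inj (ENNReal.add_ne_top.2 ⟨hab, hab⟩)).1
      (h.symm.trans (add_zero _).symm)
  filter_upwards [(lintegral_eq_zero_iff (by fun_prop)).1 hdev] with x hx
  simp only [Pi.zero_apply, add_eq_zero, mul_self_eq_zero, tsub_eq_zero_iff_le] at hx
  exact le_antisymm hx.1 hx.2

theorem ENNReal.iSup_min_natCast (a : ℝ≥0∞) : ⨆ m : ℕ, min a m = a := by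
  rw [← inf_iSup_eq, ENNReal.iSup_natCast, inf_top_eq]

theorem measurePreserving_zpow {μ : Measure X} {T : X ≃ X} (hT : MeasurePreserving T μ μ)
    (hT' : Measurable T.symm) (k : ℤ) :
    MeasurePreserving ⇑((T : Equiv.Perm X) ^ k) μ μ := by
  induction k using Int.induction_on with
  | zero => exact .id μ
  | succ n ih => simpa [zpow_add_one] using ih.comp hT
  | pred n ih =>
    simpa [zpow_sub_one] using ih.comp (hT.symm (⟨T, hT.measurable, hT'⟩ : X ≃ᵐ X))

theorem map_withDensity_of_measurePreserving {μ : Measure X} {T : X ≃ X}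
    (hT : MeasurePreserving T μ μ) (hT' : Measurable T.symm) {g : X → ℝ≥0∞}
    (hg : Measurable g) : (μ.withDensity g).map T = μ.withDensity (g ∘ T.symm) := by
  ext s hs
  rw [Measure.map_apply hT.measurable hs, withDensity_apply _ (hT.measurable hs),
    withDensity_apply _ hs, ← hT.setLIntegral_comp_preimage hs (hg.comp hT')]
  simp

theorem setLIntegral_eq_of_ae_eq_comp_symm {μ : Measure X} {T : X ≃ X}
    (hT : MeasurePreserving T μ μ) (hT' : Measurable T.symm) {f f' : X → ℝ≥0∞}
    (hf : Measurable f) (h : f' =ᵐ[μ] f ∘ T.symm)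
    {A : Set X} (hA : MeasurableSet A) :
    ∫⁻ x in A, f' x ∂μ = ∫⁻ x in T ⁻¹' A, f x ∂μ := by
  rw [lintegral_congr_ae (ae_restrict_of_ae h), ← hT.setLIntegral_comp_preimage hA (hf.comp hT')]
  simp

theorem sigmaFinite_of_bddFin [MetricSpace X] {μ : Measure X} (hμ : BddFin μ) :
    SigmaFinite μ := by
  rcases isEmpty_or_nonempty X with hX | ⟨⟨x₀⟩⟩
  · infer_instance
  exact ⟨⟨⟨fun n => Metric.ball x₀ n, fun _ => trivial,
    fun n => hμ _ Metric.isBounded_ball, Metric.iUnion_ball_nat x₀⟩⟩⟩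

theorem exists_countable_isPiSystem_generateFrom [TopologicalSpace X]
    [SecondCountableTopology X] [BorelSpace X] :
    ∃ D : Set (Set X), D.Countable ∧ univ ∈ D ∧ IsPiSystem D ∧
      ‹MeasurableSpace X› = .generateFrom D := by
  let b := TopologicalSpace.countableBasis X
  have : Countable b := (TopologicalSpace.countable_countableBasis X).to_subtype
  refine ⟨range fun t : Finset b => ⋂ i ∈ t, (i : Set X), countable_range _, ⟨∅, by simp⟩,
    ?_, le_antisymm ?_ ?_⟩
  · rintro _ ⟨t, rfl⟩ _ ⟨t', rfl⟩ -
    classical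
    exact ⟨t ∪ t', Finset.set_biInter_inter t t' _⟩
  · rw [BorelSpace.measurable_eq (α := X),
      (TopologicalSpace.isBasis_countableBasis X).borel_eq_generateFrom]
    refine MeasurableSpace.generateFrom_mono fun u hu => ⟨{⟨u, hu⟩}, by simp⟩
  · refine MeasurableSpace.generateFrom_le ?_
    rintro _ ⟨t, rfl⟩
    exact Finset.measurableSet_biInter t fun i _ =>
      ((TopologicalSpace.isBasis_countableBasis X).isOpen i.2).measurableSet

section Density

variable [MeasurableSpace.CountableOrCountablyGenerated Ω X] {μ : Measure X} {κ : Ω → Measure X}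

theorem exists_measurable_density_restrict (hκ : Measurable κ) {E : Set X}
    (hE : MeasurableSet E) (hμE : μ E ≠ ⊤) :
    ∃ q : Ω → X → ℝ≥0∞, Measurable (uncurry q) ∧ ∀ ω, κ ω E ≠ ⊤ → κ ω ≪ μ →
      (κ ω).restrict E = (μ.restrict E).withDensity (q ω) := by
  have hκE : Measurable fun ω => κ ω E := Measure.measurable_coe hE |>.comp hκ
  -- normalizing by the mass of `E` turns the family into a finite kernel
  let ρ : Kernel Ω X :=
    ⟨fun ω => (κ ω E)⁻¹ • (κ ω).restrict E, Measure.measurable_of_measurable_coe _ fun s hs => by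
      simp only [Measure.smul_apply, Measure.restrict_apply hs, smul_eq_mul]
      exact hκE.inv.mul (Measure.measurable_coe (hs.inter hE) |>.comp hκ)⟩
  have : IsFiniteKernel ρ := ⟨1, ENNReal.one_lt_top, fun ω => by
    simp [ρ, Measure.smul_apply, Measure.restrict_apply MeasurableSet.univ]⟩
  have : IsFiniteMeasure (μ.restrict E) := ⟨by simpa using hμE.lt_top⟩
  let η : Kernel Ω X := Kernel.const Ω (μ.restrict E)
  refine ⟨fun ω x => κ ω E * ρ.rnDeriv η ω x,
    (hκE.comp measurable_fst).mul (Kernel.measurable_rnDeriv ρ η), fun ω hfin hac => ?_⟩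
  have hρ := Kernel.withDensity_rnDeriv_eq (κ := ρ) (η := η) (a := ω)
    (Measure.smul_absolutelyContinuous.trans (hac.restrict E))
  rw [Kernel.withDensity_apply _ (Kernel.measurable_rnDeriv ρ η)] at hρ
  change (μ.restrict E).withDensity (ρ.rnDeriv η ω) = (κ ω E)⁻¹ • (κ ω).restrict E at hρ
  change _ = (μ.restrict E).withDensity (κ ω E • ρ.rnDeriv η ω)
  rw [withDensity_smul _ (Kernel.measurable_rnDeriv_right ρ η ω), hρ, smul_smul]
  rcases eq_or_ne (κ ω E) 0 with h0 | h0
  · simp [Measure.restrict_eq_zero.2 h0]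
  · rw [ENNReal.mul_inv_cancel h0 hfin, one_smul]

theorem exists_measurable_density (hκ : Measurable κ) {E : ℕ → Set X}
    (hE : ∀ n, MeasurableSet (E n)) (hμE : ∀ n, μ (E n) ≠ ⊤) (hcover : ⋃ n, E n = univ) :
    ∃ f : Ω → X → ℝ≥0∞, Measurable (uncurry f) ∧ ∀ ω, (∀ n, κ ω (E n) ≠ ⊤) → κ ω ≪ μ →
      κ ω = μ.withDensity (f ω) := by
  have hF := MeasurableSet.disjointed hE
  choose q hq hκq using fun n => exists_measurable_density_restrict hκ (hF n)
    (measure_ne_top_of_subset (disjointed_subset E n) (hμE n))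
  refine ⟨fun ω x => ∑' n, (disjointed E n).indicator (q n ω) x,
    Measurable.tsum fun n => (hq n).indicator (measurable_snd (hF n)),
    fun ω hfin hac => ?_⟩
  calc κ ω = Measure.sum fun n => (κ ω).restrict (disjointed E n) := by
        rw [← Measure.restrict_iUnion (disjoint_disjointed E) hF, iUnion_disjointed, hcover,
          Measure.restrict_univ]
    _ = Measure.sum fun n => μ.withDensity ((disjointed E n).indicator (q n ω)) := by
        refine congrArg Measure.sum (funext fun n => ?_)
        rw [hκq n ω (measure_ne_top_of_subset (disjointed_subset E n) (hfin n)) hac,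
          withDensity_indicator (hF n)]
    _ = μ.withDensity (fun x => ∑' n, (disjointed E n).indicator (q n ω) x) := by
        rw [← withDensity_tsum fun n => (hq n).of_uncurry_left.indicator (hF n)]
        exact congrArg _ (funext fun x => ENNReal.tsum_apply)

end Density

theorem exists_measurable_density_of_bddFin [MetricSpace X] [BorelSpace X]
    [SecondCountableTopology X] {μ : Measure X} (hμ : BddFin μ) {κ : Ω → Measure X}
    (hκ : Measurable κ) :
    ∃ f : Ω → X → ℝ≥0∞, Measurable (uncurry f) ∧ ∀ ω, BddFin (κ ω) → κ ω ≪ μ →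
      κ ω = μ.withDensity (f ω) := by
  rcases isEmpty_or_nonempty X with hX | ⟨⟨x₀⟩⟩
  · exact ⟨0, measurable_const, fun _ _ _ => Subsingleton.elim _ _⟩
  obtain ⟨f, hf, hκf⟩ := exists_measurable_density hκ (fun n => measurableSet_ball)
    (fun n => (hμ _ (Metric.isBounded_ball (x := x₀) (r := n))).ne) (Metric.iUnion_ball_nat x₀)
  exact ⟨f, hf, fun ω hω => hκf ω fun n => (hω _ Metric.isBounded_ball).ne⟩

theorem bddFin_pi [MetricSpace X] {ι : Type*} [Fintype ι] {μ : Measure X} [SigmaFinite μ]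
    (hμ : BddFin μ) : BddFin (Measure.pi fun _ : ι => μ) := fun B hB =>
  (measure_mono (subset_pi_eval_image univ B)).trans_lt <| by
    rw [Measure.pi_pi]
    exact ENNReal.prod_lt_top fun i _ => hμ _ (hB.image_eval i)

theorem pi_fin_two_graph_null {μ : Measure X} [SigmaFinite μ] [MeasurableEq X]
    (hμ : IsContinuousM μ) {F : X → X} (hF : Measurable F) :
    Measure.pi (fun _ : Fin 2 => μ) {x | x 1 = F (x 0)} = 0 := by
  have hG : MeasurableSet {p : X × X | p.2 = F p.1} := measurableSet_eq_fun measurable_snd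
    (hF.comp measurable_fst)
  change Measure.pi (fun _ : Fin 2 => μ)
    (MeasurableEquiv.finTwoArrow ⁻¹' {p : X × X | p.2 = F p.1}) = 0
  rw [(measurePreserving_finTwoArrow μ).measure_preimage hG.nullMeasurableSet,
    Measure.prod_apply hG]
  simp [preimage, hμ _]

section MomentMeasure

variable {μ : Measure X} [SigmaFinite μ] {P : Measure Ω} {g : Ω → X → ℝ≥0∞}

/-- The `n`-th moment measure `E[ν_ω^{⊗n}]` of the random measure `ν_ω = g ω • μ`. -/
def momentMeasure (P : Measure Ω) (μ : Measure X) [SigmaFinite μ] (g : Ω → X → ℝ≥0∞) (n : ℕ) :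
    Measure (Fin n → X) :=
  (Measure.pi fun _ => μ).withDensity fun x => ∫⁻ ω, ∏ i, g ω (x i) ∂P

theorem momentMeasure_absolutelyContinuous (n : ℕ) :
    momentMeasure P μ g n ≪ Measure.pi fun _ => μ :=
  withDensity_absolutelyContinuous _ _

theorem bddFin_momentMeasure [MetricSpace X] [IsProbabilityMeasure P] (hμ : BddFin μ)
    {c : ℝ≥0∞} (hc : c ≠ ⊤) (hgc : ∀ ω x, g ω x ≤ c) (n : ℕ) :
    BddFin (momentMeasure P μ g n) := fun B hB => by
  have hle : momentMeasure P μ g n ≤ c ^ n • Measure.pi fun _ => μ := by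
    rw [momentMeasure, ← withDensity_const]
    refine withDensity_mono (ae_of_all _ fun x => ?_)
    calc ∫⁻ ω, ∏ i, g ω (x i) ∂P ≤ ∫⁻ _, c ^ n ∂P := lintegral_mono fun ω => by
          simpa using Finset.prod_le_pow_card Finset.univ _ c fun i _ => hgc ω (x i)
      _ = c ^ n := by simp
  exact (hle B).trans_lt (ENNReal.mul_lt_top (ENNReal.pow_lt_top hc.lt_top) (bddFin_pi hμ B hB))

theorem momentMeasure_apply [SFinite P] (hg : Measurable (uncurry g)) {n : ℕ}
    {s : Set (Fin n → X)} (hs : MeasurableSet s) :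
    momentMeasure P μ g n s = ∫⁻ ω, ∫⁻ x in s, ∏ i, g ω (x i) ∂Measure.pi (fun _ => μ) ∂P := by
  rw [momentMeasure, withDensity_apply _ hs]
  refine lintegral_lintegral_swap (Measurable.aemeasurable ?_)
  exact Finset.measurable_prod _ fun i _ => hg.comp (measurable_snd.prodMk
    ((measurable_pi_apply i).comp measurable_fst))

theorem measurePreserving_piMap_momentMeasure [SFinite P] {T : X ≃ X}
    (hT : MeasurePreserving T μ μ) (hT' : Measurable T.symm) {S : Ω → Ω}
    (hS : MeasurePreserving S P P) (hg : Measurable (uncurry g))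
    (hgS : ∀ᵐ ω ∂P, g (S ω) =ᵐ[μ] g ω ∘ T.symm) (n : ℕ) :
    MeasurePreserving (piMap T n) (momentMeasure P μ g n) (momentMeasure P μ g n) := by
  have hTn : MeasurePreserving (piMap T n) (Measure.pi fun _ => μ) (Measure.pi fun _ => μ) :=
    measurePreserving_pi _ _ fun _ => hT
  refine ⟨hTn.measurable, Measure.ext fun s hs => ?_⟩
  have hgx : Measurable fun p : Ω × (Fin n → X) => ∏ i, g p.1 (p.2 i) :=
    Finset.measurable_prod _ fun i _ => hg.comp (measurable_fst.prodMk
      ((measurable_pi_apply i).comp measurable_snd))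
  rw [Measure.map_apply hTn.measurable hs, momentMeasure_apply hg (hTn.measurable hs),
    momentMeasure_apply hg hs]
  calc ∫⁻ ω, ∫⁻ x in piMap T n ⁻¹' s, ∏ i, g ω (x i) ∂Measure.pi (fun _ => μ) ∂P
      = ∫⁻ ω, ∫⁻ y in s, ∏ i, g ω (T.symm (y i)) ∂Measure.pi (fun _ => μ) ∂P := by
        congr 1 with ω
        rw [← hTn.setLIntegral_comp_preimage hs]
        · simp [piMap]
        · exact Finset.measurable_prod _ fun i _ =>
            hg.of_uncurry_left.comp (hT'.comp (measurable_pi_apply i))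
    _ = ∫⁻ ω, ∫⁻ y in s, ∏ i, g (S ω) (y i) ∂Measure.pi (fun _ => μ) ∂P := by
        refine lintegral_congr_ae (hgS.mono fun ω h => setLIntegral_congr_fun_ae hs ?_)
        filter_upwards [ae_all_iff.2 fun i => Measure.tendsto_eval_ae_ae (i := i) h] with y hy _
        exact Finset.prod_congr rfl fun i _ => (hy i).symm
    _ = ∫⁻ ω, ∫⁻ y in s, ∏ i, g ω (y i) ∂Measure.pi (fun _ => μ) ∂P :=
        hS.lintegral_comp hgx.lintegral_prod_right'

theorem lintegral_mul_eq_momentMeasure [SFinite P] (hg : Measurable (uncurry g)) {A B : Set X}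
    (hA : MeasurableSet A) (hB : MeasurableSet B) :
    ∫⁻ ω, (∫⁻ x in A, g ω x ∂μ) * (∫⁻ x in B, g ω x ∂μ) ∂P =
      momentMeasure P μ g 2 (MeasurableEquiv.finTwoArrow ⁻¹' A ×ˢ B) := by
  rw [momentMeasure_apply hg (MeasurableEquiv.finTwoArrow.measurable (hA.prod hB))]
  congr 1 with ω
  have hgω := hg.of_uncurry_left (x := ω)
  rw [← lintegral_prod_mul hgω.aemeasurable hgω.aemeasurable, Measure.prod_restrict,
    ← (measurePreserving_finTwoArrow μ).setLIntegral_comp_preimage (hA.prod hB)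
      (f := fun z : X × X => g ω z.1 * g ω z.2)
      ((hgω.comp measurable_fst).mul (hgω.comp measurable_snd))]
  simp [Fin.prod_univ_two]

end MomentMeasure

section PropertyP

variable {μ : Measure X}

theorem mPartMeasure_eq_pi_of_part_ne [SigmaFinite μ]
    {π : Finpartition (Finset.univ : Finset (Fin 2))} (h : π.part 0 ≠ π.part 1) :
    mPartMeasure μ π = Measure.pi fun _ => μ := by
  let p : Fin 2 → {Q // Q ∈ π.parts} := fun i => ⟨π.part i, π.part_mem.2 (Finset.mem_univ i)⟩
  have hp : Bijective p := by
    refine ⟨fun i j hij => ?_, fun ⟨Q, hQ⟩ => ?_⟩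
    · fin_cases i <;> fin_cases j <;> simp_all [p, Subtype.ext_iff, eq_comm]
    · obtain ⟨i, hi⟩ := π.nonempty_of_mem_parts hQ
      exact ⟨i, Subtype.ext (π.part_eq_of_mem hQ hi)⟩
  have := measurePreserving_arrowCongr' (fun _ => μ) (fun _ : Fin 2 => μ)
    (Equiv.ofBijective p hp).symm (.refl X) fun _ => .id μ
  rw [mPartMeasure, ← this.map_eq]
  congr 1

theorem map_zpowPiMap_mPartMeasure_compl_graph [MeasurableEq X] {T : X ≃ X}
    (hT : ∀ k : ℤ, Measurable ⇑((T : Equiv.Perm X) ^ k))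
    {π : Finpartition (Finset.univ : Finset (Fin 2))} (h : π.part 0 = π.part 1) (k : Fin 2 → ℤ) :
    (mPartMeasure μ π).map (zpowPiMap T k)
      {x | x 1 = ((T : Equiv.Perm X) ^ (k 1 - k 0)) (x 0)}ᶜ = 0 := by
  have hk : Measurable (zpowPiMap T k) :=
    measurable_pi_lambda _ fun i => (hT (k i)).comp (measurable_pi_apply i)
  have hG : MeasurableSet {x : Fin 2 → X | x 1 = ((T : Equiv.Perm X) ^ (k 1 - k 0)) (x 0)} :=
    measurableSet_eq_fun (measurable_pi_apply 1) ((hT _).comp (measurable_pi_apply 0))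
  rw [mPartMeasure, Measure.map_map hk (measurable_pi_lambda _ fun i => measurable_pi_apply _),
    Measure.map_apply (hk.comp (measurable_pi_lambda _ fun i => measurable_pi_apply _)) hG.compl]
  convert measure_empty (μ := Measure.pi fun _ => μ)
  refine eq_empty_of_forall_notMem fun y hy => hy ?_
  have hy' : (⟨π.part 0, π.part_mem.2 (Finset.mem_univ 0)⟩ : {Q // Q ∈ π.parts}) =
      ⟨π.part 1, π.part_mem.2 (Finset.mem_univ 1)⟩ := Subtype.ext h
  simp only [comp_apply, zpowPiMap, mem_ofPred_eq]
  rw [hy', ← Equiv.Perm.mul_apply, ← zpow_add, sub_add_cancel]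

theorem eq_smul_pi_of_propertyP [MetricSpace X] [BorelSpace X] [SecondCountableTopology X]
    [SigmaFinite μ] (hμ : IsContinuousM μ) {T : X ≃ X} (hT : MeasurePreserving T μ μ)
    (hT' : Measurable T.symm) (hP : PropertyP μ T) {σ : Measure (Fin 2 → X)} (hσ : BddFin σ)
    (hσμ : σ ≪ Measure.pi fun _ => μ) (hσT : MeasurePreserving (piMap T 2) σ σ) :
    ∃ β : ℝ≥0∞, σ = β • Measure.pi fun _ => μ := by
  have hmarg (i : Fin 2) : σ.map (fun x => x i) ≪ μ :=
    (hσμ.map (measurable_pi_apply i)).trans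
      (Measure.quasiMeasurePreserving_eval _ i).absolutelyContinuous
  obtain ⟨-, c, π, k, -, hσ_eq⟩ := hP 2 one_le_two σ hσ hmarg hσT
  have hTk (j : ℤ) := measurePreserving_zpow hT hT' j
  have hterm (j : ℕ) : c j • (mPartMeasure μ (π j)).map (zpowPiMap T (k j)) =
      (if (π j).part 0 = (π j).part 1 then 0 else c j) • Measure.pi fun _ => μ := by
    split_ifs with h
    -- such a term lives on the graph `G` of a power of `T`, which `σ ≪ μ ⊗ μ` does not charge
    · set G := {x : Fin 2 → X | x 1 = ((T : Equiv.Perm X) ^ (k j 1 - k j 0)) (x 0)}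
      have hle : c j • (mPartMeasure μ (π j)).map (zpowPiMap T (k j)) ≤ σ :=
        hσ_eq ▸ Measure.le_sum _ j
      have hG : σ G = 0 := hσμ (pi_fin_two_graph_null hμ (hTk _).measurable)
      have hGc : (c j • (mPartMeasure μ (π j)).map (zpowPiMap T (k j))) Gᶜ = 0 := by
        rw [Measure.smul_apply, map_zpowPiMap_mPartMeasure_compl_graph
          (fun j => (hTk j).measurable) h (k j), smul_zero]
      rw [zero_smul, ← Measure.measure_univ_eq_zero, ← le_zero_iff]
      calc _ ≤ _ := measure_univ_le_add_compl G
        _ ≤ σ G + 0 := add_le_add (hle G) hGc.le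
        _ = 0 := by rw [hG, add_zero]
    · rw [mPartMeasure_eq_pi_of_part_ne h]
      exact congrArg (c j • ·) (measurePreserving_pi _ _ fun i => hTk (k j i)).map_eq
  refine ⟨∑' j, if (π j).part 0 = (π j).part 1 then 0 else c j, ?_⟩
  ext s hs
  rw [hσ_eq, Measure.sum_apply _ hs, Measure.smul_apply, smul_eq_mul, ← ENNReal.tsum_mul_right]
  simp_rw [hterm, Measure.smul_apply, smul_eq_mul]

end PropertyP

section Ergodic

variable {μ : Measure X} [SigmaFinite μ] {P : Measure Ω} {g : Ω → X → ℝ≥0∞}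

theorem ae_setLIntegral_mul_eq [IsFiniteMeasure P] (hg : Measurable (uncurry g)) {c : ℝ≥0∞}
    (hc : c ≠ ⊤) (hgc : ∀ ω x, g ω x ≤ c) {β : ℝ≥0∞}
    (hβ : momentMeasure P μ g 2 = β • Measure.pi fun _ => μ) {A A₀ : Set X}
    (hA : MeasurableSet A) (hA₀ : MeasurableSet A₀) (hμA : μ A ≠ ⊤) (hμA₀ : μ A₀ ≠ ⊤) :
    ∀ᵐ ω ∂P, (∫⁻ x in A, g ω x ∂μ) * μ A₀ = (∫⁻ x in A₀, g ω x ∂μ) * μ A := by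
  have hZ (B : Set X) : Measurable fun ω => ∫⁻ x in B, g ω x ∂μ := hg.lintegral_prod_right
  have hmom {B B' : Set X} (hB : MeasurableSet B) (hB' : MeasurableSet B') (m m' : ℝ≥0∞) :
      ∫⁻ ω, ((∫⁻ x in B, g ω x ∂μ) * m) * ((∫⁻ x in B', g ω x ∂μ) * m') ∂P =
        β * (μ B * μ B') * (m * m') := by
    simp_rw [mul_mul_mul_comm _ m]
    rw [lintegral_mul_const (f := fun ω => (∫⁻ x in B, g ω x ∂μ) * ∫⁻ x in B', g ω x ∂μ) _
      ((hZ B).mul (hZ B')), lintegral_mul_eq_momentMeasure hg hB hB', hβ,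
      Measure.smul_apply, smul_eq_mul,
      (measurePreserving_finTwoArrow μ).measure_preimage (hB.prod hB').nullMeasurableSet,
      Measure.prod_prod]
  have hbound (B : Set X) (ω : Ω) : ∫⁻ x in B, g ω x ∂μ ≤ c * μ B :=
    (lintegral_mono fun x => hgc ω x).trans_eq (setLIntegral_const B c)
  refine ae_eq_of_lintegral_mul_eq ((hZ A).mul_const _) ((hZ A₀).mul_const _) ?_ ?_ ?_
  · refine ne_top_of_le_ne_top (b := ∫⁻ _, (c * μ A * μ A₀) * (c * μ A₀ * μ A) ∂P) ?_
      (lintegral_mono fun ω => by gcongr <;> exact hbound _ ω)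
    rw [lintegral_const]
    exact ENNReal.mul_ne_top (by finiteness) (measure_ne_top P univ)
  · rw [hmom hA hA, hmom hA hA₀]; ring
  · rw [hmom hA₀ hA₀, hmom hA hA₀]; ring

theorem exists_ae_setLIntegral_eq_mul [IsFiniteMeasure P] (hμ : μ ≠ 0) {T : X ≃ X}
    (hT : MeasurePreserving T μ μ) (hT' : Measurable T.symm) {S : Ω → Ω} (hS : Ergodic S P)
    (hg : Measurable (uncurry g)) {c : ℝ≥0∞} (hc : c ≠ ⊤) (hgc : ∀ ω x, g ω x ≤ c)
    (hgS : ∀ᵐ ω ∂P, g (S ω) =ᵐ[μ] g ω ∘ T.symm) {β : ℝ≥0∞}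
    (hβ : momentMeasure P μ g 2 = β • Measure.pi fun _ => μ) :
    ∃ α : ℝ≥0∞, ∀ A, MeasurableSet A → μ A ≠ ⊤ → ∀ᵐ ω ∂P, ∫⁻ x in A, g ω x ∂μ = α * μ A := by
  obtain ⟨n, hn⟩ := exists_pos_measure_of_cover (iUnion_spanningSets μ) hμ
  set A₀ := spanningSets μ n
  have hA₀ : MeasurableSet A₀ := measurableSet_spanningSets μ n
  have hμA₀ : μ A₀ ≠ ⊤ := (measure_spanningSets_lt_top μ n).ne
  have hTA₀ : μ (T ⁻¹' A₀) = μ A₀ := hT.measure_preimage hA₀.nullMeasurableSet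
  have hinv : (fun ω => ∫⁻ x in A₀, g ω x ∂μ) ∘ S =ᵐ[P] fun ω => ∫⁻ x in A₀, g ω x ∂μ := by
    filter_upwards [hgS, ae_setLIntegral_mul_eq hg hc hgc hβ (hT.measurable hA₀) hA₀
      (hTA₀ ▸ hμA₀) hμA₀] with ω hω h
    rw [comp_apply, setLIntegral_eq_of_ae_eq_comp_symm hT hT' hg.of_uncurry_left hω hA₀]
    rwa [hTA₀, ENNReal.mul_left_inj hn.ne' hμA₀] at h
  obtain ⟨v, hv⟩ := hS.ae_eq_const_of_ae_eq_comp₀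
    (hg.lintegral_prod_right (ν := μ.restrict A₀)).nullMeasurable hinv
  refine ⟨v / μ A₀, fun A hA hμA => ?_⟩
  filter_upwards [ae_setLIntegral_mul_eq hg hc hgc hβ hA hA₀ hμA hμA₀, hv] with ω h hvω
  rw [hvω, const_apply, mul_comm, ← ENNReal.eq_div_iff hn.ne' hμA₀] at h
  rw [h, div_eq_mul_inv, div_eq_mul_inv, mul_right_comm]

theorem ae_ae_eq_const_of_forall_setLIntegral_eq [TopologicalSpace X]
    [SecondCountableTopology X] [BorelSpace X] (hg : Measurable (uncurry g)) {c : ℝ≥0∞}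
    (hc : c ≠ ⊤) (hgc : ∀ ω x, g ω x ≤ c) {α : ℝ≥0∞}
    (h : ∀ A, MeasurableSet A → μ A ≠ ⊤ → ∀ᵐ ω ∂P, ∫⁻ x in A, g ω x ∂μ = α * μ A) :
    ∀ᵐ ω ∂P, g ω =ᵐ[μ] fun _ => α := by
  obtain ⟨D, hDc, hDuniv, hDpi, hgen⟩ := exists_countable_isPiSystem_generateFrom (X := X)
  have hDm (s : Set X) (hs : s ∈ D) : MeasurableSet s :=
    hgen ▸ MeasurableSpace.measurableSet_generateFrom hs
  have hall : ∀ᵐ ω ∂P, ∀ s ∈ D, ∀ n, ∫⁻ x in s ∩ spanningSets μ n, g ω x ∂μ =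
      α * μ (s ∩ spanningSets μ n) := by
    refine (ae_ball_iff hDc).2 fun s hs => ae_all_iff.2 fun n => h _
      ((hDm s hs).inter (measurableSet_spanningSets μ n)) ?_
    exact measure_ne_top_of_subset inter_subset_right (measure_spanningSets_lt_top μ n).ne
  filter_upwards [hall] with ω hω
  rw [← withDensity_eq_iff_of_sigmaFinite hg.of_uncurry_left.aemeasurable aemeasurable_const,
    withDensity_const]
  refine Measure.ext_of_generateFrom_of_cover hgen (countable_range (spanningSets μ)) hDpi
    (sUnion_range _ |>.trans (iUnion_spanningSets μ)) ?_ ?_ ?_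
  · rintro _ ⟨n, rfl⟩
    rw [withDensity_apply _ (measurableSet_spanningSets μ n)]
    refine ne_top_of_le_ne_top (ENNReal.mul_ne_top hc (measure_spanningSets_lt_top μ n).ne) ?_
    exact (lintegral_mono fun x => hgc ω x).trans_eq (setLIntegral_const _ c)
  · rintro _ ⟨n, rfl⟩ s hs
    rw [withDensity_apply _ ((hDm s hs).inter (measurableSet_spanningSets μ n)), hω s hs n,
      Measure.smul_apply, smul_eq_mul]
  · rintro _ ⟨n, rfl⟩
    simpa [withDensity_apply _ (measurableSet_spanningSets μ n)] using hω univ hDuniv n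

theorem ae_ae_eq_const_of_propertyP [MetricSpace X] [BorelSpace X] [SecondCountableTopology X]
    [IsProbabilityMeasure P] (hμ : μ ≠ 0) (hμbdd : BddFin μ) (hμc : IsContinuousM μ)
    {T : X ≃ X} (hT : MeasurePreserving T μ μ) (hT' : Measurable T.symm) (hP : PropertyP μ T)
    {S : Ω → Ω} (hS : Ergodic S P) (hg : Measurable (uncurry g)) {c : ℝ≥0∞} (hc : c ≠ ⊤)
    (hgc : ∀ ω x, g ω x ≤ c) (hgS : ∀ᵐ ω ∂P, g (S ω) =ᵐ[μ] g ω ∘ T.symm) :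
    ∃ α : ℝ≥0∞, ∀ᵐ ω ∂P, g ω =ᵐ[μ] fun _ => α := by
  obtain ⟨β, hβ⟩ := eq_smul_pi_of_propertyP hμc hT hT' hP (bddFin_momentMeasure hμbdd hc hgc 2)
    (momentMeasure_absolutelyContinuous 2)
    (measurePreserving_piMap_momentMeasure hT hT' hS.toMeasurePreserving hg hgS 2)
  obtain ⟨α, hα⟩ := exists_ae_setLIntegral_eq_mul hμ hT hT' hS hg hc hgc hgS hβ
  exact ⟨α, ae_ae_eq_const_of_forall_setLIntegral_eq hg hc hgc hα⟩

end Ergodic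

theorem stmt8_general
    {X : Type*} [MeasurableSpace X] [MetricSpace X] [BorelSpace X]
    [TopologicalSpace.SeparableSpace X]
    {Ω : Type*} [MeasurableSpace Ω]
    (μ : Measure X) (hμbdd : BddFin μ) (hμcont : IsContinuousM μ)
    (T : X ≃ X) (hTmeas' : Measurable ⇑T.symm)
    (hT : MeasurePreserving ⇑T μ μ)
    (hP : PropertyP μ T)
    (P : Measure Ω) [IsProbabilityMeasure P]
    (S : Ω ≃ Ω) (hSerg : Ergodic ⇑S P)
    (N : TRM μ (⇑T) P (⇑S))
    (hac : ∀ᵐ ω ∂P, N.toFun ω ≪ μ) :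
    ∃ α : ℝ≥0∞, ∀ᵐ ω ∂P, N.toFun ω = α • μ := by
  rcases eq_or_ne μ 0 with rfl | hμ
  · exact ⟨0, hac.mono fun ω h => by simpa using h⟩
  have := UniformSpace.secondCountable_of_separable X
  have := sigmaFinite_of_bddFin hμbdd
  obtain ⟨f, hf, hNf⟩ := exists_measurable_density_of_bddFin hμbdd N.measurable'
  have hN : ∀ᵐ ω ∂P, N.toFun ω = μ.withDensity (f ω) := by
    filter_upwards [N.bddFin', hac] with ω using hNf ω
  have hfS : ∀ᵐ ω ∂P, f (S ω) =ᵐ[μ] f ω ∘ T.symm := by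
    filter_upwards [N.equivariant', hN, hSerg.quasiMeasurePreserving.ae hN] with ω h hω hSω
    rwa [hSω, hω, map_withDensity_of_measurePreserving hT hTmeas' hf.of_uncurry_left,
      withDensity_eq_iff_of_sigmaFinite (by fun_prop) (by fun_prop)] at h
  choose α hα using fun m : ℕ => ae_ae_eq_const_of_propertyP (g := fun ω x => min (f ω x) m)
    hμ hμbdd hμcont hT hTmeas' hP hSerg (hf.min measurable_const) (ENNReal.natCast_ne_top m)
    (fun _ _ => min_le_right _ _) (hfS.mono fun ω h => h.mono fun x hx => by simp [hx])
  refine ⟨⨆ m, α m, ?_⟩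
  filter_upwards [hN, ae_all_iff.2 hα] with ω hω hαω
  rw [hω, ← withDensity_const]
  refine withDensity_congr_ae ((ae_all_iff.2 hαω).mono fun x hx => ?_)
  rw [← ENNReal.iSup_min_natCast (f ω x)]
  exact iSup_congr hx

/-- If `T` has property (P), any ergodic `T`-random measure whose realizations
are a.s. absolutely continuous with respect to `μ` is a.s. equal to `α·μ` for some constant
`α ∈ [0,∞]` (no moment hypothesis). -/
theorem stmt8
    {X : Type*} [MeasurableSpace X] [MetricSpace X] [BorelSpace X]
    [TopologicalSpace.SeparableSpace X] [CompleteSpace X]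
    {Ω : Type*} [MeasurableSpace Ω]
    (μ : Measure X) (hμbdd : BddFin μ) (hμcont : IsContinuousM μ) (hμinf : μ Set.univ = ⊤)
    (T : X ≃ X) (hTmeas : Measurable ⇑T) (hTmeas' : Measurable ⇑T.symm)
    (hT : MeasurePreserving ⇑T μ μ)
    (hP : PropertyP μ T)
    (P : Measure Ω) [IsProbabilityMeasure P]
    (S : Ω ≃ Ω) (hS : MeasurePreserving ⇑S P P) (hSerg : Ergodic ⇑S P)
    (N : TRM μ (⇑T) P (⇑S))
    (hac : ∀ᵐ ω ∂P, N.toFun ω ≪ μ) :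
    ∃ α : ℝ≥0∞, ∀ᵐ ω ∂P, N.toFun ω = α • μ :=
  stmt8_general μ hμbdd hμcont T hTmeas' hT hP P S hSerg N hac

end PPP
end
end
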